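/- arXiv:1506.03423 — 7 statements merged into one kernel-verified Lean document; each statement's English description precedes it below -/
import Mathlib

section
/- Let M > 0, let Δ > 0, let x_1 be real, and let k > 2 be an integer. If Q is a real polynomial of degree 2 with leading coefficient a_2 such that |Q(x_1 + jΔ)| ≤ M for all integers j with 0 ≤ j ≤ k-1, then a_2 ≤ (M/Δ^2)·(8/(k-1)^2) when k is odd, and a_2 ≤ (M/Δ^2)·(8/(k(k-2))) when k is even. -/
/-!
For a quadratic `Q` with leading coefficient `a` and nodes `x < y < z` with gaps `s = y - x`,
`t = z - y`, the second difference `t Q(x) - (s + t) Q(y) + s Q(z)` equals `a s t (s + t)`.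
Bounding each value by `M` gives `a s t ≤ 2M`. On the progression take `x, z` the two ends and
`y` the middle node (the lower of the two middle nodes when `k` is even): then
`4 s t = (k - 1)² Δ²` for odd `k` and `4 s t = k (k - 2) Δ²` for even `k`.
-/

open Polynomial

namespace Polynomial

theorem eval_eq_of_natDegree_le_two {R : Type*} [CommSemiring R] {Q : R[X]}
    (hQ : Q.natDegree ≤ 2) (x : R) :
    Q.eval x = Q.coeff 0 + Q.coeff 1 * x + Q.coeff 2 * x ^ 2 := by
  rw [eval_eq_sum_range' (by omega : Q.natDegree < 3)]
  simp [Finset.sum_range_succ]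

theorem second_difference_of_natDegree_le_two {R : Type*} [CommRing R] {Q : R[X]}
    (hQ : Q.natDegree ≤ 2) (x s t : R) :
    t * Q.eval x - (s + t) * Q.eval (x + s) + s * Q.eval (x + s + t) =
      Q.coeff 2 * (s * t * (s + t)) := by
  simp only [eval_eq_of_natDegree_le_two hQ]
  ring

theorem coeff_two_mul_le_of_abs_eval_le {Q : ℝ[X]} (hQ : Q.natDegree ≤ 2) {x s t M : ℝ}
    (hs : 0 ≤ s) (ht : 0 ≤ t) (hst : 0 < s + t) (h₀ : |Q.eval x| ≤ M)
    (h₁ : |Q.eval (x + s)| ≤ M) (h₂ : |Q.eval (x + s + t)| ≤ M) :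
    Q.coeff 2 * (s * t) ≤ 2 * M := by
  refine le_of_mul_le_mul_right ?_ hst
  calc Q.coeff 2 * (s * t) * (s + t)
      = t * Q.eval x - (s + t) * Q.eval (x + s) + s * Q.eval (x + s + t) := by
        rw [second_difference_of_natDegree_le_two hQ]; ring
    _ ≤ t * M + (s + t) * M + s * M := by
        linarith [mul_le_mul_of_nonneg_left (abs_le.mp h₀).2 ht,
          mul_le_mul_of_nonneg_left (abs_le.mp h₁).1 hst.le,
          mul_le_mul_of_nonneg_left (abs_le.mp h₂).2 hs]
    _ = 2 * M * (s + t) := by ring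

theorem coeff_two_mul_le_of_abs_eval_le_progression {Q : ℝ[X]} (hQ : Q.natDegree ≤ 2)
    {x₁ Δ M : ℝ} (hΔ : 0 < Δ) {n : ℕ} (hn : 0 < n)
    (hbd : ∀ j : ℕ, j ≤ n → |Q.eval (x₁ + j * Δ)| ≤ M) {i : ℕ} (hi : i ≤ n) :
    Q.coeff 2 * (i * (n - i) * Δ ^ 2) ≤ 2 * M := by
  have hin : (i : ℝ) ≤ n := by exact_mod_cast hi
  have hn' : (0 : ℝ) < n := by exact_mod_cast hn
  have key := coeff_two_mul_le_of_abs_eval_le hQ (x := x₁) (s := i * Δ) (t := (n - i) * Δ)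
    (by positivity) (mul_nonneg (by linarith) hΔ.le) (by nlinarith)
    (by simpa using hbd 0 (Nat.zero_le n)) (hbd i hi) (by convert hbd n le_rfl using 3; ring)
  linarith [show (i : ℝ) * Δ * ((n - i) * Δ) = i * (n - i) * Δ ^ 2 by ring]

end Polynomial

theorem stmt_1_general (M Δ x₁ : ℝ) (hΔ : 0 < Δ) (k : ℕ) (hk : 2 < k)
    (Q : Polynomial ℝ) (hdeg : Q.natDegree = 2)
    (hbd : ∀ j : ℕ, j ≤ k - 1 → |Q.eval (x₁ + j * Δ)| ≤ M) :
    (Odd k → Q.leadingCoeff ≤ (M / Δ ^ 2) * (8 / ((k : ℝ) - 1) ^ 2)) ∧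
    (Even k → Q.leadingCoeff ≤ (M / Δ ^ 2) * (8 / ((k : ℝ) * ((k : ℝ) - 2)))) := by
  rw [leadingCoeff, hdeg]
  have hmid (i : ℕ) (hi : i ≤ k - 1) :=
    coeff_two_mul_le_of_abs_eval_le_progression hdeg.le hΔ (by omega) hbd hi
  constructor
  · rintro ⟨m, rfl⟩
    have hm : (1 : ℝ) ≤ m := by exact_mod_cast (by omega : 1 ≤ m)
    have h := hmid m (by omega)
    rw [show ((2 * m + 1 - 1 : ℕ) : ℝ) = 2 * m by push_cast [Nat.add_sub_cancel]; ring] at h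
    rw [show M / Δ ^ 2 * (8 / (((2 * m + 1 : ℕ) : ℝ) - 1) ^ 2) = 2 * M / (m * m * Δ ^ 2) by
      push_cast; field_simp; ring, le_div_iff₀ (by positivity)]
    linarith
  · rintro ⟨m, rfl⟩
    have hm : (2 : ℝ) ≤ m := by exact_mod_cast (by omega : 2 ≤ m)
    have hm₁ : (0 : ℝ) < m - 1 := by linarith
    have h := hmid m (by omega)
    rw [show ((m + m - 1 : ℕ) : ℝ) = 2 * m - 1 by rw [Nat.cast_sub (by omega)]; push_cast; ring] at h
    rw [show M / Δ ^ 2 * (8 / (((m + m : ℕ) : ℝ) * ((m + m : ℕ) - 2))) =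
        2 * M / (m * (m - 1) * Δ ^ 2) by
      push_cast; rw [show (m : ℝ) + m - 2 = 2 * (m - 1) by ring]; field_simp; ring,
      le_div_iff₀ (by positivity)]
    linarith

theorem stmt_1 (M Δ x₁ : ℝ) (hM : 0 < M) (hΔ : 0 < Δ) (k : ℕ) (hk : 2 < k)
    (Q : Polynomial ℝ) (hdeg : Q.natDegree = 2)
    (hbd : ∀ j : ℕ, j ≤ k - 1 → |Q.eval (x₁ + j * Δ)| ≤ M) :
    (Odd k → Q.leadingCoeff ≤ (M / Δ ^ 2) * (8 / ((k : ℝ) - 1) ^ 2)) ∧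
    (Even k → Q.leadingCoeff ≤ (M / Δ ^ 2) * (8 / ((k : ℝ) * ((k : ℝ) - 2)))) :=
  stmt_1_general M Δ x₁ hΔ k hk Q hdeg hbd
end

section
/- Let M > 0, let Δ > 0, let x_1 be real, and let k > 3 be an integer. If Q is a real polynomial of degree 3 with leading coefficient a_3 such that |Q(x_1 + jΔ)| ≤ M for all integers j with 0 ≤ j ≤ k-1, then: a_3 ≤ (M/Δ^3)·(32/(k-1)^3) if k ≡ 1 (mod 4); a_3 ≤ (M/Δ^3)·(32/(k(k-1)(k-2))) if k ≡ 2 (mod 4); a_3 ≤ (M/Δ^3)·(32/((k+1)(k-1)(k-3))) if k ≡ 3 (mod 4); and a_3 ≤ (M/Δ^3)·(32/(k(k-1)(k-2))) if k ≡ 0 (mod 4). -/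
lemma cubic_bound (a b c d M p q y : ℝ) (hp : 0 < p) (hq : 0 < q)
    (h0 : |a*y^3+b*y^2+c*y+d| ≤ M)
    (h1 : |a*(y+p)^3+b*(y+p)^2+c*(y+p)+d| ≤ M)
    (h2 : |a*(y+p+q)^3+b*(y+p+q)^2+c*(y+p+q)+d| ≤ M)
    (h3 : |a*(y+2*p+q)^3+b*(y+2*p+q)^2+c*(y+2*p+q)+d| ≤ M) :
    a ≤ 4*M/(p*q*(2*p+q)) := by
  rw [le_div_iff₀ (by positivity : (0:ℝ) < p*q*(2*p+q))]
  obtain ⟨h0l, h0r⟩ := abs_le.mp h0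
  obtain ⟨h1l, h1r⟩ := abs_le.mp h1
  obtain ⟨h2l, h2r⟩ := abs_le.mp h2
  obtain ⟨h3l, h3r⟩ := abs_le.mp h3
  have key : a*(p*q*(p+q)*(2*p+q)) =
      q*((a*(y+2*p+q)^3+b*(y+2*p+q)^2+c*(y+2*p+q)+d) - (a*y^3+b*y^2+c*y+d))
      + (2*p+q)*((a*(y+p)^3+b*(y+p)^2+c*(y+p)+d) - (a*(y+p+q)^3+b*(y+p+q)^2+c*(y+p+q)+d)) := by
    ring
  have hpq : (0:ℝ) < p + q := by linarith
  have step : a*(p*q*(p+q)*(2*p+q)) ≤ (4*p+4*q)*M := by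
    rw [key]
    nlinarith [mul_le_mul_of_nonneg_left h3r hq.le, mul_le_mul_of_nonneg_left h0l hq.le,
      mul_le_mul_of_nonneg_left h1r (by linarith : (0:ℝ) ≤ 2*p+q),
      mul_le_mul_of_nonneg_left h2l (by linarith : (0:ℝ) ≤ 2*p+q)]
  nlinarith [step, hpq, mul_pos (mul_pos hp hq) (by linarith : (0:ℝ) < 2*p+q)]

lemma conv_bound (M Δ E F : ℝ) (hΔ : Δ ≠ 0) (hE : E ≠ 0) (hF : F = 8*E) :
    4*M/(Δ^3*E) = M/Δ^3*(32/F) := by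
  subst hF
  field_simp
  ring

theorem stmt_2 (M Δ x₁ : ℝ) (hM : 0 < M) (hΔ : 0 < Δ) (k : ℕ) (hk : 3 < k)
    (Q : Polynomial ℝ) (hdeg : Q.natDegree = 3)
    (hbd : ∀ j : ℕ, j ≤ k - 1 → |Q.eval (x₁ + j * Δ)| ≤ M) :
    (k % 4 = 1 → Q.leadingCoeff ≤ (M / Δ ^ 3) * (32 / ((k : ℝ) - 1) ^ 3)) ∧
    (k % 4 = 2 → Q.leadingCoeff ≤ (M / Δ ^ 3) * (32 / ((k : ℝ) * ((k : ℝ) - 1) * ((k : ℝ) - 2)))) ∧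
    (k % 4 = 3 → Q.leadingCoeff ≤ (M / Δ ^ 3) * (32 / (((k : ℝ) + 1) * ((k : ℝ) - 1) * ((k : ℝ) - 3)))) ∧
    (k % 4 = 0 → Q.leadingCoeff ≤ (M / Δ ^ 3) * (32 / ((k : ℝ) * ((k : ℝ) - 1) * ((k : ℝ) - 2)))) := by
  have hlc : Q.leadingCoeff = Q.coeff 3 := by rw [Polynomial.leadingCoeff, hdeg]
  set a := Q.coeff 3 with ha
  set b := Q.coeff 2 with hb
  set c := Q.coeff 1 with hc
  set d := Q.coeff 0 with hd
  have heval : ∀ x : ℝ, Q.eval x = a*x^3 + b*x^2 + c*x + d := by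
    intro x
    rw [Polynomial.eval_eq_sum_range' (show Q.natDegree < 4 by omega)]
    simp [Finset.sum_range_succ]
    ring
  have hbd' : ∀ j : ℕ, j ≤ k - 1 → |a*(x₁ + (j:ℝ)*Δ)^3 + b*(x₁+(j:ℝ)*Δ)^2 + c*(x₁+(j:ℝ)*Δ) + d| ≤ M := by
    intro j hj
    have := hbd j hj
    rwa [heval] at this
  rw [hlc]
  refine ⟨?_, ?_, ?_, ?_⟩
  · -- k % 4 = 1
    intro hr
    obtain ⟨m, hm1, hm⟩ : ∃ m, 1 ≤ m ∧ k = 4*m+1 := ⟨k/4, by omega, by omega⟩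
    have hmR : (0:ℝ) < (m:ℝ) := by exact_mod_cast hm1
    have B0 := hbd' 0 (by omega)
    have B1 := hbd' m (by omega)
    have B2 := hbd' (3*m) (by omega)
    have B3 := hbd' (4*m) (by omega)
    have hv := cubic_bound a b c d M ((m:ℝ)*Δ) (2*(m:ℝ)*Δ) x₁
      (by positivity) (by positivity)
      (by convert B0 using 3 <;> push_cast <;> ring)
      (by convert B1 using 3 <;> push_cast <;> ring)
      (by convert B2 using 3 <;> push_cast <;> ring)
      (by convert B3 using 3 <;> push_cast <;> ring)
    have hv' : a ≤ 4*M/(Δ^3*((m:ℝ)*(2*(m:ℝ))*(4*(m:ℝ)))) := by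
      rwa [show ((m:ℝ)*Δ)*(2*(m:ℝ)*Δ)*(2*((m:ℝ)*Δ)+2*(m:ℝ)*Δ)
        = Δ^3*((m:ℝ)*(2*(m:ℝ))*(4*(m:ℝ))) from by ring] at hv
    have hkR : (k:ℝ) = 4*(m:ℝ)+1 := by rw [hm]; push_cast; ring
    rw [hkR]
    calc a ≤ _ := hv'
      _ = M / Δ ^ 3 * (32 / (4*(m:ℝ)+1-1)^3) :=
        conv_bound M Δ _ _ (ne_of_gt hΔ) (by positivity) (by ring)
  · -- k % 4 = 2
    intro hr
    obtain ⟨m, hm1, hm⟩ : ∃ m, 1 ≤ m ∧ k = 4*m+2 := ⟨k/4, by omega, by omega⟩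
    have hmR : (0:ℝ) < (m:ℝ) := by exact_mod_cast hm1
    have B0 := hbd' 0 (by omega)
    have B1 := hbd' m (by omega)
    have B2 := hbd' (3*m+1) (by omega)
    have B3 := hbd' (4*m+1) (by omega)
    have hv := cubic_bound a b c d M ((m:ℝ)*Δ) ((2*(m:ℝ)+1)*Δ) x₁
      (by positivity) (by positivity)
      (by convert B0 using 3 <;> push_cast <;> ring)
      (by convert B1 using 3 <;> push_cast <;> ring)
      (by convert B2 using 3 <;> push_cast <;> ring)
      (by convert B3 using 3 <;> push_cast <;> ring)
    have hv' : a ≤ 4*M/(Δ^3*((m:ℝ)*(2*(m:ℝ)+1)*(4*(m:ℝ)+1))) := by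
      rwa [show ((m:ℝ)*Δ)*((2*(m:ℝ)+1)*Δ)*(2*((m:ℝ)*Δ)+(2*(m:ℝ)+1)*Δ)
        = Δ^3*((m:ℝ)*(2*(m:ℝ)+1)*(4*(m:ℝ)+1)) from by ring] at hv
    have hkR : (k:ℝ) = 4*(m:ℝ)+2 := by rw [hm]; push_cast; ring
    rw [hkR]
    calc a ≤ _ := hv'
      _ = M / Δ ^ 3 * (32 / ((4*(m:ℝ)+2)*((4*(m:ℝ)+2)-1)*((4*(m:ℝ)+2)-2))) :=
        conv_bound M Δ _ _ (ne_of_gt hΔ) (by positivity) (by ring)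
  · -- k % 4 = 3
    intro hr
    obtain ⟨m, hm1, hm⟩ : ∃ m, 1 ≤ m ∧ k = 4*m+3 := ⟨k/4, by omega, by omega⟩
    have hmR : (0:ℝ) < (m:ℝ) := by exact_mod_cast hm1
    have B0 := hbd' 0 (by omega)
    have B1 := hbd' (m+1) (by omega)
    have B2 := hbd' (3*m+1) (by omega)
    have B3 := hbd' (4*m+2) (by omega)
    have hv := cubic_bound a b c d M (((m:ℝ)+1)*Δ) (2*(m:ℝ)*Δ) x₁
      (by positivity) (by positivity)
      (by convert B0 using 3 <;> push_cast <;> ring)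
      (by convert B1 using 3 <;> push_cast <;> ring)
      (by convert B2 using 3 <;> push_cast <;> ring)
      (by convert B3 using 3 <;> push_cast <;> ring)
    have hv' : a ≤ 4*M/(Δ^3*(((m:ℝ)+1)*(2*(m:ℝ))*(4*(m:ℝ)+2))) := by
      rwa [show (((m:ℝ)+1)*Δ)*(2*(m:ℝ)*Δ)*(2*(((m:ℝ)+1)*Δ)+2*(m:ℝ)*Δ)
        = Δ^3*(((m:ℝ)+1)*(2*(m:ℝ))*(4*(m:ℝ)+2)) from by ring] at hv
    have hkR : (k:ℝ) = 4*(m:ℝ)+3 := by rw [hm]; push_cast; ring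
    rw [hkR]
    calc a ≤ _ := hv'
      _ = M / Δ ^ 3 * (32 / ((4*(m:ℝ)+3+1)*((4*(m:ℝ)+3)-1)*((4*(m:ℝ)+3)-3))) :=
        conv_bound M Δ _ _ (ne_of_gt hΔ) (by positivity) (by ring)
  · -- k % 4 = 0
    intro hr
    obtain ⟨m, hm1, hm⟩ : ∃ m, 1 ≤ m ∧ k = 4*m := ⟨k/4, by omega, by omega⟩
    have hmR : (0:ℝ) < (m:ℝ) := by exact_mod_cast hm1
    have hmR' : (1:ℝ) ≤ (m:ℝ) := by exact_mod_cast hm1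
    have B0 := hbd' 0 (by omega)
    have B1 := hbd' m (by omega)
    have B2 := hbd' (3*m-1) (by omega)
    have B3 := hbd' (4*m-1) (by omega)
    have hc2 : ((3*m-1 : ℕ):ℝ) = 3*(m:ℝ)-1 := by
      have h := congrArg (Nat.cast : ℕ → ℝ) (show (3*m-1 : ℕ) + 1 = 3*m by omega)
      push_cast at h; linarith
    have hc3 : ((4*m-1 : ℕ):ℝ) = 4*(m:ℝ)-1 := by
      have h := congrArg (Nat.cast : ℕ → ℝ) (show (4*m-1 : ℕ) + 1 = 4*m by omega)
      push_cast at h; linarith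
    rw [hc2] at B2
    rw [hc3] at B3
    have hq0 : (0:ℝ) < 2*(m:ℝ)-1 := by linarith
    have hv := cubic_bound a b c d M ((m:ℝ)*Δ) ((2*(m:ℝ)-1)*Δ) x₁
      (by positivity) (mul_pos hq0 hΔ)
      (by convert B0 using 3 <;> push_cast <;> ring)
      (by convert B1 using 3 <;> push_cast <;> ring)
      (by convert B2 using 3 <;> ring)
      (by convert B3 using 3 <;> ring)
    have hv' : a ≤ 4*M/(Δ^3*((m:ℝ)*(2*(m:ℝ)-1)*(4*(m:ℝ)-1))) := by
      rwa [show ((m:ℝ)*Δ)*((2*(m:ℝ)-1)*Δ)*(2*((m:ℝ)*Δ)+(2*(m:ℝ)-1)*Δ)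
        = Δ^3*((m:ℝ)*(2*(m:ℝ)-1)*(4*(m:ℝ)-1)) from by ring] at hv
    have hkR : (k:ℝ) = 4*(m:ℝ) := by rw [hm]; push_cast; ring
    rw [hkR]
    have hE : (m:ℝ)*(2*(m:ℝ)-1)*(4*(m:ℝ)-1) ≠ 0 := by
      have : (0:ℝ) < 4*(m:ℝ)-1 := by linarith
      positivity
    calc a ≤ _ := hv'
      _ = M / Δ ^ 3 * (32 / ((4*(m:ℝ))*((4*(m:ℝ))-1)*((4*(m:ℝ))-2))) :=
        conv_bound M Δ _ _ (ne_of_gt hΔ) hE (by ring)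
end

section
/- Let k > d ≥ 2 and let x_1 < x_2 < ... < x_k be real numbers. Suppose Q is a real polynomial of degree d that is extremal for (d, {x_1,...,x_k}). Then all d roots of Q (counted with multiplicity, over the complex numbers) are real. -/
open Polynomial

/-- `Q` is extremal for `(d, {x 0, ..., x (k-1)})`: it has degree `d`, is bounded in absolute
value by `1` on the points `x i`, and its leading coefficient is maximal among all degree `d`
polynomials bounded in absolute value by `1` on the points `x i`. -/
def IsExtremal (d : ℕ) {k : ℕ} (x : Fin k → ℝ) (Q : Polynomial ℝ) : Prop :=
  Q.natDegree = d ∧ (∀ i : Fin k, |Q.eval (x i)| ≤ 1) ∧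
    ∀ R : Polynomial ℝ, R.natDegree = d → (∀ i : Fin k, |R.eval (x i)| ≤ 1) →
      R.leadingCoeff ≤ Q.leadingCoeff

theorem stmt_7 (d k : ℕ) (hd : 2 ≤ d) (hdk : d < k) (x : Fin k → ℝ) (hx : StrictMono x)
    (Q : Polynomial ℝ) (hQ : IsExtremal d x Q) :
    ∀ z : ℂ, (Q.map (algebraMap ℝ ℂ)).IsRoot z → z.im = 0 := by
  intro z hz
  by_contra hb
  obtain ⟨hdeg, hbound, hmax⟩ := hQ
  have hQ0 : Q ≠ 0 := by
    intro h; rw [h] at hdeg; simp at hdeg; omega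
  have hlc0 : Q.leadingCoeff ≠ 0 := leadingCoeff_ne_zero.mpr hQ0
  have hlcpos : 0 < Q.leadingCoeff := by
    have h1 := hmax (-Q) (by simp [hdeg]) (fun i => by simpa using hbound i)
    rw [leadingCoeff_neg] at h1
    rcases hlc0.lt_or_gt with h | h
    · linarith
    · exact h
  set a : ℝ := z.re with ha
  set b : ℝ := z.im with hbdef
  -- the real quadratic with roots z, conj z
  set P : ℝ[X] := X ^ 2 - C (2 * a) * X + C (a ^ 2 + b ^ 2) with hP
  have hPmonic : P.Monic := by
    unfold P; monicity!
  have hPdeg : P.natDegree = 2 := by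
    unfold P; compute_degree!
  -- z is a root of Q over ℂ, hence so is conj z
  have hconj : aeval ((starRingEnd ℂ) z) Q = 0 := by
    rw [aeval_conj]
    have : aeval z Q = 0 := by rwa [aeval_def, ← eval_map]
    rw [this, map_zero]
  have hzroot : aeval z Q = 0 := by rwa [aeval_def, ← eval_map]
  have hne : (starRingEnd ℂ) z ≠ z := by
    intro h
    apply hb
    have := congrArg Complex.im h
    simp only [Complex.conj_im] at this
    linarith
  -- (X - z)(X - conj z) divides map Q
  have hmapP : P.map (algebraMap ℝ ℂ) = (X - C z) * (X - C ((starRingEnd ℂ) z)) := by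
    have h1 : z + (starRingEnd ℂ) z = ((2 * a : ℝ) : ℂ) := by
      rw [Complex.add_conj]; try push_cast [ha]; try ring
    have h2 : z * (starRingEnd ℂ) z = ((a ^ 2 + b ^ 2 : ℝ) : ℂ) := by
      rw [Complex.mul_conj]
      simp [Complex.normSq_apply, ha, hbdef]
      push_cast; ring
    unfold P
    simp only [Polynomial.map_add, Polynomial.map_sub, Polynomial.map_mul,
      Polynomial.map_pow, map_X, map_C]
    have : (algebraMap ℝ ℂ) (2 * a) = z + (starRingEnd ℂ) z := by
      rw [h1]; rfl
    have h2' : (algebraMap ℝ ℂ) (a ^ 2 + b ^ 2) = z * (starRingEnd ℂ) z := by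
      rw [h2]; rfl
    rw [this, h2', C_add, C_mul]
    ring
  have hdvdC : P.map (algebraMap ℝ ℂ) ∣ Q.map (algebraMap ℝ ℂ) := by
    rw [hmapP]
    obtain ⟨T, hT⟩ := (dvd_iff_isRoot).mpr hz
    have hTroot : T.IsRoot ((starRingEnd ℂ) z) := by
      have hev : (Q.map (algebraMap ℝ ℂ)).eval ((starRingEnd ℂ) z) = 0 := by
        rwa [eval_map, ← aeval_def]
      rw [hT, eval_mul] at hev
      rcases mul_eq_zero.mp hev with h | h
      · exfalso; apply hne; simpa [sub_eq_zero] using h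
      · exact h
    obtain ⟨U, hU⟩ := (dvd_iff_isRoot).mpr hTroot
    exact ⟨U, by rw [hT, hU]; ring⟩
  have hdvd : P ∣ Q := (map_dvd_map (algebraMap ℝ ℂ)
    (algebraMap ℝ ℂ).injective hPmonic).mp hdvdC
  obtain ⟨S, hQS⟩ := hdvd
  have hS0 : S ≠ 0 := by
    intro h; rw [h, mul_zero] at hQS; exact hQ0 hQS
  have hP0 : P ≠ 0 := hPmonic.ne_zero
  have hSdeg : S.natDegree = d - 2 := by
    have := natDegree_mul hP0 hS0
    rw [← hQS, hdeg, hPdeg] at this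
    omega
  -- the competitor polynomial
  set R : ℝ[X] := (X - C a) ^ 2 * S with hR
  have hXa0 : ((X - C a) ^ 2 : ℝ[X]) ≠ 0 := pow_ne_zero _ (X_sub_C_ne_zero a)
  have hRdeg : R.natDegree = d := by
    rw [hR, natDegree_mul hXa0 hS0, natDegree_pow, natDegree_X_sub_C, hSdeg]
    omega
  have hRlc : R.leadingCoeff = Q.leadingCoeff := by
    rw [hR, leadingCoeff_mul, hQS, leadingCoeff_mul, hPmonic.leadingCoeff,
      leadingCoeff_pow, leadingCoeff_X_sub_C, one_pow, one_mul]
  have hPeval : ∀ t : ℝ, P.eval t = (t - a) ^ 2 + b ^ 2 := by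
    intro t; unfold P; simp; ring
  have hRbound : ∀ i : Fin k, |R.eval (x i)| < 1 := by
    intro i
    have hQe : Q.eval (x i) = ((x i - a) ^ 2 + b ^ 2) * S.eval (x i) := by
      rw [hQS, eval_mul, hPeval]
    have hRe : R.eval (x i) = (x i - a) ^ 2 * S.eval (x i) := by
      rw [hR, eval_mul, eval_pow, eval_sub, eval_X, eval_C]
    by_cases hs : S.eval (x i) = 0
    · rw [hRe, hs, mul_zero, abs_zero]; norm_num
    · have hb2 : 0 < b ^ 2 := by positivity
      have hsa : 0 < |S.eval (x i)| := abs_pos.mpr hs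
      have h1 : |R.eval (x i)| = (x i - a) ^ 2 * |S.eval (x i)| := by
        rw [hRe, abs_mul, abs_of_nonneg (sq_nonneg _)]
      have h2 : |Q.eval (x i)| = ((x i - a) ^ 2 + b ^ 2) * |S.eval (x i)| := by
        rw [hQe, abs_mul, abs_of_nonneg (by positivity)]
      have := hbound i
      rw [h2] at this
      rw [h1]
      nlinarith [sq_nonneg (x i - a)]
  -- take the sup of |R.eval (x i)|
  have hne' : (Finset.univ : Finset (Fin k)).Nonempty := by
    refine Finset.univ_nonempty_iff.mpr ?_
    exact Fin.pos_iff_nonempty.mp (by omega)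
  set m : ℝ := Finset.univ.sup' hne' (fun i => |R.eval (x i)|) with hm
  have hm1 : m < 1 := by
    rw [hm, Finset.sup'_lt_iff]
    intro i _; exact hRbound i
  have hmem : ∀ i : Fin k, |R.eval (x i)| ≤ m := fun i =>
    Finset.le_sup' (fun j => |R.eval (x j)|) (Finset.mem_univ i)
  have hmpos : 0 < m := by
    rcases lt_or_ge 0 m with h | h
    · exact h
    · exfalso
      have hall : ∀ i : Fin k, R.eval (x i) = 0 := by
        intro i
        have := hmem i
        have := abs_nonneg (R.eval (x i))
        have : |R.eval (x i)| = 0 := le_antisymm (by linarith [hmem i]) (abs_nonneg _)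
        exact abs_eq_zero.mp this
      have hR0 : R = 0 := by
        apply Polynomial.eq_zero_of_natDegree_lt_card_of_eval_eq_zero R hx.injective hall
        rw [hRdeg, Fintype.card_fin]; exact hdk
      rw [hR0] at hRlc
      simp at hRlc
      exact hlc0 hRlc.symm
  -- scale R up
  have hm0 : (1 : ℝ) / m ≠ 0 := by positivity
  have hcontr := hmax (C (1 / m) * R)
    (by rw [natDegree_C_mul hm0, hRdeg])
    (by
      intro i
      rw [eval_mul, eval_C, abs_mul, abs_of_pos (by positivity : (0:ℝ) < 1 / m)]
      rw [div_mul_eq_mul_div, one_mul, div_le_one hmpos]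
      exact hmem i)
  rw [leadingCoeff_mul, leadingCoeff_C, hRlc] at hcontr
  have h1m : 1 < 1 / m := by
    rw [lt_div_iff₀ hmpos]; linarith
  nlinarith
end

section
/- Let k > d ≥ 2 and let x_1 < x_2 < ... < x_k be real numbers. Suppose Q is a real polynomial of degree d that is extremal for (d, {x_1,...,x_k}). Then Q has no repeated roots: all d roots of Q are distinct (Q is squarefree). -/
open Polynomial Finset

lemma aux_exists (k : ℕ) (x : Fin k → ℝ) (hx : StrictMono x) (T : Polynomial ℝ)
    (hT : T ≠ 0) (hdeg : T.natDegree < k) : ∃ i, T.eval (x i) ≠ 0 := by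
  by_contra h
  push_neg at h
  exact hT (Polynomial.eq_zero_of_natDegree_lt_card_of_eval_eq_zero T hx.injective h
    (by simpa using hdeg))

set_option maxHeartbeats 1000000 in
theorem stmt_8 (d k : ℕ) (hd : 2 ≤ d) (hdk : d < k) (x : Fin k → ℝ) (hx : StrictMono x)
    (Q : Polynomial ℝ) (hQ : IsExtremal d x Q) :
    Squarefree Q := by
  obtain ⟨hdeg, hbound, hmax⟩ := hQ
  have hk0 : 0 < k := by omega
  have : Nonempty (Fin k) := ⟨⟨0, hk0⟩⟩
  have hQ0 : Q ≠ 0 := by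
    intro h; rw [h, natDegree_zero] at hdeg; omega
  -- leading coefficient is positive
  have hlcpos : 0 < Q.leadingCoeff := by
    obtain ⟨W, hW⟩ : ∃ W : Polynomial ℝ,
        W = ∏ i : Fin d, (X - C (x (Fin.castLE hdk.le i))) := ⟨_, rfl⟩
    have hWm : W.Monic := by
      rw [hW]; exact monic_prod_of_monic _ _ (fun i _ => monic_X_sub_C _)
    have hWd : W.natDegree = d := by
      rw [hW, natDegree_prod _ _ (fun i _ => X_sub_C_ne_zero _)]
      simp
    obtain ⟨M, hM⟩ : ∃ M : ℝ,
        M = univ.sup' univ_nonempty (fun j => |W.eval (x j)|) := ⟨_, rfl⟩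
    have hMle : ∀ i, |W.eval (x i)| ≤ M := by
      intro i; rw [hM]; exact le_sup' (fun j => |W.eval (x j)|) (mem_univ i)
    have hM0 : 0 ≤ M := le_trans (abs_nonneg _) (hMle ⟨0, hk0⟩)
    have hεpos : (0:ℝ) < 1 / (M + 1) := by positivity
    have h1 : (C (1 / (M + 1)) * W).natDegree = d := by
      rw [natDegree_C_mul (ne_of_gt hεpos), hWd]
    have h2 : ∀ i, |(C (1 / (M + 1)) * W).eval (x i)| ≤ 1 := by
      intro i
      rw [eval_mul, eval_C, abs_mul, abs_of_pos hεpos]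
      have h3 := hMle i
      rw [div_mul_eq_mul_div, one_mul, div_le_one (by linarith)]
      linarith
    have h5 := hmax _ h1 h2
    have h4 : (C (1 / (M + 1)) * W).leadingCoeff = 1 / (M + 1) := by
      rw [leadingCoeff_mul, leadingCoeff_C, hWm.leadingCoeff, mul_one]
    rw [h4] at h5
    linarith
  by_contra hsf
  rw [Squarefree] at hsf
  push_neg at hsf
  obtain ⟨p, hdvd, hpu⟩ := hsf
  obtain ⟨S, hQS⟩ := hdvd
  have hp0 : p ≠ 0 := by rintro rfl; simp at hQS; exact hQ0 (by simp [hQS])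
  have hS0 : S ≠ 0 := by rintro rfl; simp at hQS; exact hQ0 hQS
  have hpd : 1 ≤ p.natDegree := by
    by_contra h
    push_neg at h
    have h0 : p.natDegree = 0 := by omega
    have hpc : p = C (p.coeff 0) := eq_C_of_natDegree_eq_zero h0
    apply hpu
    rw [hpc]
    refine isUnit_C.2 (isUnit_iff_ne_zero.2 fun hc => hp0 ?_)
    rw [hpc, hc, map_zero]
  have hdegsum : p.natDegree + p.natDegree + S.natDegree = d := by
    have h6 := natDegree_mul (mul_ne_zero hp0 hp0) hS0
    rw [← hQS, hdeg, natDegree_mul hp0 hp0] at h6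
    omega
  have hSd : S.natDegree < d := by omega
  -- bound B on |S| at the points
  obtain ⟨B, hB⟩ : ∃ B : ℝ,
      B = univ.sup' univ_nonempty (fun j => |S.eval (x j)|) := ⟨_, rfl⟩
  have hBle : ∀ i, |S.eval (x i)| ≤ B := by
    intro i; rw [hB]; exact le_sup' (fun j => |S.eval (x j)|) (mem_univ i)
  have hB0 : 0 ≤ B := le_trans (abs_nonneg _) (hBle ⟨0, hk0⟩)
  -- s : min of |S| over points where S ≠ 0
  have hTS : (univ.filter (fun i => S.eval (x i) ≠ 0)).Nonempty := by
    obtain ⟨i, hi⟩ := aux_exists k x hx S hS0 (by omega)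
    exact ⟨i, by simp [hi]⟩
  obtain ⟨s, hs⟩ : ∃ s : ℝ, s = (univ.filter (fun i => S.eval (x i) ≠ 0)).inf' hTS
      (fun j => |S.eval (x j)|) := ⟨_, rfl⟩
  have hspos : 0 < s := by
    rw [hs, lt_inf'_iff]
    intro j hj
    simp only [mem_filter, mem_univ, true_and] at hj
    exact abs_pos.2 hj
  have hsle : ∀ i, S.eval (x i) ≠ 0 → s ≤ |S.eval (x i)| := by
    intro i hi
    rw [hs]
    exact inf'_le (fun j => |S.eval (x j)|) (by simp [hi])
  -- m : min of p^2 over points where p ≠ 0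
  have hTp : (univ.filter (fun i => p.eval (x i) ≠ 0)).Nonempty := by
    obtain ⟨i, hi⟩ := aux_exists k x hx p hp0 (by omega)
    exact ⟨i, by simp [hi]⟩
  obtain ⟨m, hm⟩ : ∃ m : ℝ, m = (univ.filter (fun i => p.eval (x i) ≠ 0)).inf' hTp
      (fun j => (p.eval (x j))^2) := ⟨_, rfl⟩
  have hmpos : 0 < m := by
    rw [hm, lt_inf'_iff]
    intro j hj
    simp only [mem_filter, mem_univ, true_and] at hj
    exact pow_two_pos_of_ne_zero hj
  have hmle : ∀ i, p.eval (x i) ≠ 0 → m ≤ (p.eval (x i))^2 := by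
    intro i hi
    rw [hm]
    exact inf'_le (fun j => (p.eval (x j))^2) (by simp [hi])
  -- choose e and c
  obtain ⟨e, he⟩ : ∃ e : ℝ, e = (min m (1 / (B + 1))) / 2 := ⟨_, rfl⟩
  have hepos : 0 < e := by
    have h1 : 0 < min m (1 / (B + 1)) := lt_min hmpos (by positivity)
    rw [he]; linarith
  have hem : e < m := by
    have h1 : min m (1 / (B + 1)) ≤ m := min_le_left _ _
    rw [he]; linarith
  have heB : e * B ≤ 1 / 2 := by
    have h1 : e ≤ 1 / (2 * (B + 1)) := by
      have h2 : min m (1 / (B + 1)) ≤ 1 / (B + 1) := min_le_right _ _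
      rw [he]
      calc (min m (1 / (B + 1))) / 2 ≤ (1 / (B + 1)) / 2 := by linarith
        _ = 1 / (2 * (B + 1)) := by rw [div_div, mul_comm]
    calc e * B ≤ (1 / (2 * (B + 1))) * B := by nlinarith
      _ ≤ 1 / 2 := by
          rw [div_mul_eq_mul_div, one_mul, div_le_div_iff₀ (by positivity) (by norm_num)]
          nlinarith
  obtain ⟨c, hc⟩ : ∃ c : ℝ, c = min (e * s) 1 := ⟨_, rfl⟩
  have hcpos : 0 < c := by
    rw [hc]; exact lt_min (mul_pos hepos hspos) one_pos
  have hc1 : c ≤ 1 := by rw [hc]; exact min_le_right _ _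
  have hces : c ≤ e * s := by rw [hc]; exact min_le_left _ _
  -- the competitor
  obtain ⟨R, hR⟩ : ∃ R : Polynomial ℝ, R = C (1 + c) * (Q - C e * S) := ⟨_, rfl⟩
  have hQeS : (Q - C e * S).natDegree = d := by
    rw [natDegree_sub_eq_left_of_natDegree_lt, hdeg]
    calc (C e * S).natDegree ≤ S.natDegree := natDegree_C_mul_le _ _
      _ < d := hSd
      _ = Q.natDegree := hdeg.symm
  have hRd : R.natDegree = d := by
    rw [hR, natDegree_C_mul (by positivity : (1:ℝ) + c ≠ 0), hQeS]
  have hRb : ∀ i, |R.eval (x i)| ≤ 1 := by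
    intro i
    have hQi : Q.eval (x i) = (p.eval (x i))^2 * S.eval (x i) := by
      rw [hQS]; simp [sq]
    rw [hR, eval_mul, eval_C, eval_sub, eval_mul, eval_C, abs_mul,
      abs_of_pos (by positivity : (0:ℝ) < 1 + c)]
    rcases eq_or_ne (S.eval (x i)) 0 with hSi | hSi
    · rw [hQi, hSi]; simp
    rcases eq_or_ne (p.eval (x i)) 0 with hpi | hpi
    · rw [hQi, hpi]
      rw [show (0:ℝ)^2 * S.eval (x i) - e * S.eval (x i) = -(e * S.eval (x i)) by ring,
        abs_neg, abs_mul, abs_of_pos hepos]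
      have h4 : e * |S.eval (x i)| ≤ 1/2 :=
        le_trans (mul_le_mul_of_nonneg_left (hBle i) hepos.le) heB
      nlinarith [abs_nonneg (S.eval (x i)), hepos.le]
    · -- main case
      have hpm : m ≤ (p.eval (x i))^2 := hmle i hpi
      have hss : s ≤ |S.eval (x i)| := hsle i hSi
      have hQb := hbound i
      rw [hQi]
      have h1 : (p.eval (x i))^2 * S.eval (x i) - e * S.eval (x i)
          = ((p.eval (x i))^2 - e) * S.eval (x i) := by ring
      rw [h1, abs_mul, abs_of_pos (by nlinarith : (0:ℝ) < (p.eval (x i))^2 - e)]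
      have h2 : ((p.eval (x i))^2 - e) * |S.eval (x i)|
          = |Q.eval (x i)| - e * |S.eval (x i)| := by
        rw [hQi, abs_mul, abs_of_nonneg (by positivity : (0:ℝ) ≤ (p.eval (x i))^2)]
        ring
      rw [h2]
      have h3 : |Q.eval (x i)| - e * |S.eval (x i)| ≤ 1 - e * s := by
        have := mul_le_mul_of_nonneg_left hss hepos.le
        linarith
      have h4 : (1+c) * (|Q.eval (x i)| - e * |S.eval (x i)|) ≤ (1+c) * (1 - e*s) :=
        mul_le_mul_of_nonneg_left h3 (by linarith)
      have h5 : (1+c) * (1 - e*s) ≤ 1 := by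
        nlinarith [hces, mul_nonneg hcpos.le (mul_nonneg hepos.le hspos.le)]
      linarith
  have hRlc : R.leadingCoeff = (1 + c) * Q.leadingCoeff := by
    have hlc2 : (Q - C e * S).leadingCoeff = Q.leadingCoeff := by
      rw [leadingCoeff, hQeS, ← hdeg, coeff_sub, leadingCoeff]
      have h7 : (C e * S).coeff Q.natDegree = 0 := by
        apply coeff_eq_zero_of_natDegree_lt
        calc (C e * S).natDegree ≤ S.natDegree := natDegree_C_mul_le _ _
          _ < Q.natDegree := by omega
      rw [h7, sub_zero]
    rw [hR, leadingCoeff_mul, leadingCoeff_C, hlc2]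
  have hfin := hmax R hRd hRb
  rw [hRlc] at hfin
  nlinarith
end

section
/- Let k > d ≥ 2 and let x_1 < x_2 < ... < x_k be real numbers. Suppose Q is a real polynomial of degree d that is extremal for (d, {x_1,...,x_k}). Then every root r of Q satisfies x_1 < r < x_k; that is, all roots of Q lie in the open interval (x_1, x_k). -/
open Polynomial

lemma lc_pos (d k : ℕ) (hd : 2 ≤ d) (hdk : d < k) (x : Fin k → ℝ) (hx : StrictMono x)
    (Q : Polynomial ℝ)
    (hQ : ∀ R : Polynomial ℝ, R.natDegree = d → (∀ i : Fin k, |R.eval (x i)| ≤ 1) →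
      R.leadingCoeff ≤ Q.leadingCoeff) : 0 < Q.leadingCoeff := by
  have hk : 3 ≤ k := by omega
  set a := x ⟨0, by omega⟩ with ha
  set t := x ⟨k - 1, by omega⟩ with ht
  have hat : a < t := hx (by simp [Fin.lt_def]; omega)
  set B : ℝ := (t - a) ^ d + 1 with hB
  have h0 : (0:ℝ) ≤ (t - a) ^ d := pow_nonneg (by linarith) d
  have hBpos : 0 < B := by rw [hB]; linarith
  set ε : ℝ := B⁻¹ with hε
  have hεpos : 0 < ε := by positivity
  set R₀ : Polynomial ℝ := C ε * (X - C a) ^ d with hR₀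
  have hdeg : R₀.natDegree = d := by
    rw [hR₀, natDegree_C_mul (ne_of_gt hεpos), natDegree_pow, natDegree_X_sub_C, mul_one]
  have hbound : ∀ i : Fin k, |R₀.eval (x i)| ≤ 1 := by
    intro i
    have h1 : a ≤ x i := hx.monotone (by simp [Fin.le_def])
    have h2 : x i ≤ t := hx.monotone (by simp [Fin.le_def]; omega)
    have : R₀.eval (x i) = ε * (x i - a) ^ d := by simp [hR₀]
    rw [this, abs_of_nonneg (by have := pow_nonneg (by linarith : (0:ℝ) ≤ x i - a) d; nlinarith)]
    have hpow : (x i - a) ^ d ≤ (t - a) ^ d := by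
      apply pow_le_pow_left₀ (by linarith) (by linarith)
    calc ε * (x i - a) ^ d ≤ ε * (t - a) ^ d := by nlinarith
      _ ≤ ε * B := by nlinarith
      _ = 1 := inv_mul_cancel₀ (ne_of_gt hBpos)
  have hlc : R₀.leadingCoeff = ε := by
    rw [hR₀, leadingCoeff_mul, leadingCoeff_C, ((monic_X_sub_C a).pow d).leadingCoeff, mul_one]
  have := hQ R₀ hdeg hbound
  rw [hlc] at this
  linarith

set_option maxHeartbeats 1000000 in
lemma aux_right (d k : ℕ) (hd : 2 ≤ d) (hdk : d < k) (x : Fin k → ℝ) (hx : StrictMono x)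
    (Q : Polynomial ℝ) (hQd : Q.natDegree = d) (hQb : ∀ i : Fin k, |Q.eval (x i)| ≤ 1)
    (hQmax : ∀ R : Polynomial ℝ, R.natDegree = d → (∀ i : Fin k, |R.eval (x i)| ≤ 1) →
      R.leadingCoeff ≤ Q.leadingCoeff)
    (r : ℝ) (hr : Q.IsRoot r) : r < x ⟨k - 1, by omega⟩ := by
  have hk : 3 ≤ k := by omega
  have hlcQ : 0 < Q.leadingCoeff := lc_pos d k hd hdk x hx Q hQmax
  by_contra hcon
  push_neg at hcon
  set a := x ⟨0, by omega⟩ with ha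
  set u := x ⟨k - 2, by omega⟩ with hu
  set t := x ⟨k - 1, by omega⟩ with ht
  have hau : a < u := hx (by simp [Fin.lt_def]; omega)
  have hut : u < t := hx (by simp [Fin.lt_def]; omega)
  -- factor Q
  obtain ⟨P, hP⟩ := (Polynomial.dvd_iff_isRoot.mpr hr)
  have hQ0 : Q ≠ 0 := fun h => by simp [h] at hlcQ
  have hP0 : P ≠ 0 := fun h => hQ0 (by simp [hP, h])
  have hdP : P.natDegree = d - 1 := by
    have h1 := Polynomial.natDegree_mul (Polynomial.X_sub_C_ne_zero r) hP0
    rw [← hP, hQd, Polynomial.natDegree_X_sub_C] at h1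
    omega
  have hlcP : P.leadingCoeff = Q.leadingCoeff := by
    rw [hP, Polynomial.leadingCoeff_mul, (Polynomial.monic_X_sub_C r).leadingCoeff, one_mul]
  set M := |P.eval t| with hM
  have hM0 : 0 ≤ M := abs_nonneg _
  set ε : ℝ := min ((t - u) / 2) (1 / (2 * (M + 1))) with hε
  have hεpos : 0 < ε := lt_min (by linarith) (by positivity)
  have hεu : ε ≤ (t - u) / 2 := min_le_left _ _
  have hεM : ε * M ≤ 1 / 2 := by
    have h1 : ε ≤ 1 / (2 * (M + 1)) := min_le_right _ _
    have h2 : 0 < 2 * (M + 1) := by linarith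
    rw [le_div_iff₀ h2] at h1
    nlinarith
  set r' : ℝ := t - ε with hr'
  have hur' : u < r' := by rw [hr']; linarith
  have har' : a < r' := by linarith
  set c : ℝ := max (1 - ε / (t - a)) (1 / 2) with hc
  have hta : 0 < t - a := by linarith
  have hc1 : c < 1 := by
    apply max_lt _ (by norm_num)
    have : 0 < ε / (t - a) := by positivity
    linarith
  have hc0 : 0 < c := lt_of_lt_of_le (by norm_num) (le_max_right _ _)
  set R : Polynomial ℝ := Polynomial.C c⁻¹ * ((Polynomial.X - Polynomial.C r') * P) with hR
  have hdegR : R.natDegree = d := by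
    rw [hR, Polynomial.natDegree_C_mul (inv_ne_zero hc0.ne'),
      Polynomial.natDegree_mul (Polynomial.X_sub_C_ne_zero r') hP0,
      Polynomial.natDegree_X_sub_C, hdP]
    omega
  have hboundR : ∀ i : Fin k, |R.eval (x i)| ≤ 1 := by
    intro i
    have hevalR : R.eval (x i) = c⁻¹ * ((x i - r') * P.eval (x i)) := by
      simp [hR]
    have key : |x i - r'| * |P.eval (x i)| ≤ c := by
      rcases Nat.lt_or_ge (i : ℕ) (k - 1) with hik | hik
      · -- inner points
        have hxu : x i ≤ u := hx.monotone (by simp [Fin.le_def]; omega)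
        have hxa : a ≤ x i := hx.monotone (by simp [Fin.le_def])
        have habs1 : |x i - r'| = r' - x i := by rw [abs_of_nonpos (by linarith)]; ring
        have hQx : (r - x i) * |P.eval (x i)| ≤ 1 := by
          have : Q.eval (x i) = (x i - r) * P.eval (x i) := by simp [hP]
          have h2 := hQb i
          rw [this, abs_mul, abs_of_nonpos (by linarith : x i - r ≤ 0)] at h2
          linarith [h2]
        have hPnn : 0 ≤ |P.eval (x i)| := abs_nonneg _
        have hkey : (r' - x i) * (t - a) ≤ (r' - a) * (r - x i) := by
          nlinarith [mul_nonneg (by linarith : (0:ℝ) ≤ t - r') (by linarith : (0:ℝ) ≤ x i - a),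
            mul_nonneg (by linarith : (0:ℝ) ≤ r' - a) (by linarith : (0:ℝ) ≤ r - t)]
        have h3 : r' - a ≤ c * (t - a) := by
          have h4 := le_max_left (1 - ε / (t - a)) (1 / 2)
          have h5 : (1 - ε / (t - a)) * (t - a) = r' - a := by
            field_simp
            ring
          have h6 := mul_le_mul_of_nonneg_right h4 hta.le
          rw [h5] at h6
          exact h6
        rw [habs1]
        nlinarith [mul_le_mul_of_nonneg_left hQx (by linarith : (0:ℝ) ≤ r' - a),
          mul_le_mul_of_nonneg_right hkey hPnn]
      · -- last point
        have hik' : (i : ℕ) = k - 1 := by omega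
        have hxt : x i = t := by rw [ht]; congr 1; exact Fin.ext hik'
        have habs : |x i - r'| = ε := by
          rw [hxt, hr']
          rw [show t - (t - ε) = ε by ring, abs_of_pos hεpos]
        rw [habs, hxt, ← hM]
        calc ε * M ≤ 1 / 2 := hεM
          _ ≤ c := le_max_right _ _
    rw [hevalR, abs_mul, abs_mul, abs_of_pos (inv_pos.mpr hc0)]
    calc c⁻¹ * (|x i - r'| * |P.eval (x i)|) ≤ c⁻¹ * c := by
          apply mul_le_mul_of_nonneg_left key (le_of_lt (inv_pos.mpr hc0))
      _ = 1 := inv_mul_cancel₀ hc0.ne'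
  have hlcR : R.leadingCoeff = c⁻¹ * Q.leadingCoeff := by
    rw [hR, Polynomial.leadingCoeff_mul, Polynomial.leadingCoeff_mul,
      Polynomial.leadingCoeff_C, (Polynomial.monic_X_sub_C r').leadingCoeff, one_mul, hlcP]
  have hle := hQmax R hdegR hboundR
  rw [hlcR] at hle
  nlinarith [mul_inv_cancel₀ hc0.ne']

set_option maxHeartbeats 1000000 in
lemma aux_left (d k : ℕ) (hd : 2 ≤ d) (hdk : d < k) (x : Fin k → ℝ) (hx : StrictMono x)
    (Q : Polynomial ℝ) (hQd : Q.natDegree = d) (hQb : ∀ i : Fin k, |Q.eval (x i)| ≤ 1)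
    (hQmax : ∀ R : Polynomial ℝ, R.natDegree = d → (∀ i : Fin k, |R.eval (x i)| ≤ 1) →
      R.leadingCoeff ≤ Q.leadingCoeff)
    (r : ℝ) (hr : Q.IsRoot r) : x ⟨0, by omega⟩ < r := by
  have hk : 3 ≤ k := by omega
  have hlcQ : 0 < Q.leadingCoeff := lc_pos d k hd hdk x hx Q hQmax
  by_contra hcon
  push_neg at hcon
  set a := x ⟨0, by omega⟩ with ha
  set b := x ⟨1, by omega⟩ with hb
  set t := x ⟨k - 1, by omega⟩ with ht
  have hab : a < b := hx (by simp [Fin.lt_def])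
  have hbt : b < t := hx (by simp [Fin.lt_def]; omega)
  obtain ⟨P, hP⟩ := (Polynomial.dvd_iff_isRoot.mpr hr)
  have hQ0 : Q ≠ 0 := fun h => by simp [h] at hlcQ
  have hP0 : P ≠ 0 := fun h => hQ0 (by simp [hP, h])
  have hdP : P.natDegree = d - 1 := by
    have h1 := Polynomial.natDegree_mul (Polynomial.X_sub_C_ne_zero r) hP0
    rw [← hP, hQd, Polynomial.natDegree_X_sub_C] at h1
    omega
  have hlcP : P.leadingCoeff = Q.leadingCoeff := by
    rw [hP, Polynomial.leadingCoeff_mul, (Polynomial.monic_X_sub_C r).leadingCoeff, one_mul]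
  set M := |P.eval a| with hM
  have hM0 : 0 ≤ M := abs_nonneg _
  set ε : ℝ := min ((b - a) / 2) (1 / (2 * (M + 1))) with hε
  have hεpos : 0 < ε := lt_min (by linarith) (by positivity)
  have hεb : ε ≤ (b - a) / 2 := min_le_left _ _
  have hεM : ε * M ≤ 1 / 2 := by
    have h1 : ε ≤ 1 / (2 * (M + 1)) := min_le_right _ _
    have h2 : 0 < 2 * (M + 1) := by linarith
    rw [le_div_iff₀ h2] at h1
    nlinarith
  set r' : ℝ := a + ε with hr'
  have hr'b : r' < b := by rw [hr']; linarith
  have har' : a < r' := by rw [hr']; linarith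
  set c : ℝ := max (1 - ε / (t - a)) (1 / 2) with hc
  have hta : 0 < t - a := by linarith
  have hc1 : c < 1 := by
    apply max_lt _ (by norm_num)
    have : 0 < ε / (t - a) := by positivity
    linarith
  have hc0 : 0 < c := lt_of_lt_of_le (by norm_num) (le_max_right _ _)
  set R : Polynomial ℝ := Polynomial.C c⁻¹ * ((Polynomial.X - Polynomial.C r') * P) with hR
  have hdegR : R.natDegree = d := by
    rw [hR, Polynomial.natDegree_C_mul (inv_ne_zero hc0.ne'),
      Polynomial.natDegree_mul (Polynomial.X_sub_C_ne_zero r') hP0,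
      Polynomial.natDegree_X_sub_C, hdP]
    omega
  have hboundR : ∀ i : Fin k, |R.eval (x i)| ≤ 1 := by
    intro i
    have hevalR : R.eval (x i) = c⁻¹ * ((x i - r') * P.eval (x i)) := by
      simp [hR]
    have key : |x i - r'| * |P.eval (x i)| ≤ c := by
      rcases Nat.eq_zero_or_pos (i : ℕ) with hik | hik
      · -- first point
        have hxa : x i = a := by rw [ha]; congr 1; exact Fin.ext hik
        have habs : |x i - r'| = ε := by
          rw [hxa, hr', show a - (a + ε) = -ε by ring, abs_neg, abs_of_pos hεpos]
        rw [habs, hxa, ← hM]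
        calc ε * M ≤ 1 / 2 := hεM
          _ ≤ c := le_max_right _ _
      · -- other points
        have hxb : b ≤ x i := hx.monotone (by simp [Fin.le_def]; omega)
        have hxt : x i ≤ t := hx.monotone (by simp [Fin.le_def]; omega)
        have habs1 : |x i - r'| = x i - r' := abs_of_nonneg (by linarith)
        have hQx : (x i - r) * |P.eval (x i)| ≤ 1 := by
          have h0 : Q.eval (x i) = (x i - r) * P.eval (x i) := by simp [hP]
          have h2 := hQb i
          rw [h0, abs_mul, abs_of_nonneg (by linarith : (0:ℝ) ≤ x i - r)] at h2
          linarith [h2]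
        have hPnn : 0 ≤ |P.eval (x i)| := abs_nonneg _
        have hkey : (x i - r') * (t - a) ≤ (t - r') * (x i - r) := by
          nlinarith [mul_nonneg (by linarith : (0:ℝ) ≤ r' - a) (by linarith : (0:ℝ) ≤ t - x i),
            mul_nonneg (by linarith : (0:ℝ) ≤ t - r') (by linarith : (0:ℝ) ≤ a - r)]
        have h3 : t - r' ≤ c * (t - a) := by
          have h4 := le_max_left (1 - ε / (t - a)) (1 / 2)
          have h5 : (1 - ε / (t - a)) * (t - a) = t - r' := by
            field_simp
            ring
          have h6 := mul_le_mul_of_nonneg_right h4 hta.le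
          rw [h5] at h6
          exact h6
        rw [habs1]
        nlinarith [mul_le_mul_of_nonneg_left hQx (by linarith : (0:ℝ) ≤ t - r'),
          mul_le_mul_of_nonneg_right hkey hPnn]
    rw [hevalR, abs_mul, abs_mul, abs_of_pos (inv_pos.mpr hc0)]
    calc c⁻¹ * (|x i - r'| * |P.eval (x i)|) ≤ c⁻¹ * c := by
          apply mul_le_mul_of_nonneg_left key (le_of_lt (inv_pos.mpr hc0))
      _ = 1 := inv_mul_cancel₀ hc0.ne'
  have hlcR : R.leadingCoeff = c⁻¹ * Q.leadingCoeff := by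
    rw [hR, Polynomial.leadingCoeff_mul, Polynomial.leadingCoeff_mul,
      Polynomial.leadingCoeff_C, (Polynomial.monic_X_sub_C r').leadingCoeff, one_mul, hlcP]
  have hle := hQmax R hdegR hboundR
  rw [hlcR] at hle
  nlinarith [mul_inv_cancel₀ hc0.ne']

theorem stmt_9 (d k : ℕ) (hd : 2 ≤ d) (hdk : d < k) (x : Fin k → ℝ) (hx : StrictMono x)
    (Q : Polynomial ℝ) (hQ : IsExtremal d x Q) :
    ∀ r : ℝ, Q.IsRoot r →
      x ⟨0, by omega⟩ < r ∧ r < x ⟨k - 1, by omega⟩ := by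
  intro r hr
  obtain ⟨hQd, hQb, hQmax⟩ := hQ
  exact ⟨aux_left d k hd hdk x hx Q hQd hQb hQmax r hr,
    aux_right d k hd hdk x hx Q hQd hQb hQmax r hr⟩
end

section
/- Let k > 3 be an integer. If Q is a real polynomial of degree 3 that is extremal for (3, {1,2,...,k}), then the leading coefficient of Q equals: 32/(k−1)^3 if k ≡ 1 (mod 4); 32/(k(k−1)(k−2)) if k ≡ 2 (mod 4); 32/((k+1)(k−1)(k−3)) if k ≡ 3 (mod 4); and 32/(k(k−1)(k−2)) if k ≡ 0 (mod 4). -/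
/-- `Q` is extremal for `(d, {1, 2, ..., k})`: it has degree `d`, is bounded in absolute
value by `1` at the integer points `1, ..., k`, and its leading coefficient is maximal among
all degree `d` polynomials bounded in absolute value by `1` at these points. -/
def IsExtremalOnRange (d k : ℕ) (Q : Polynomial ℝ) : Prop :=
  Q.natDegree = d ∧ (∀ j : ℕ, 1 ≤ j → j ≤ k → |Q.eval (j : ℝ)| ≤ 1) ∧
    ∀ R : Polynomial ℝ, R.natDegree = d → (∀ j : ℕ, 1 ≤ j → j ≤ k → |R.eval (j : ℝ)| ≤ 1) →
      R.leadingCoeff ≤ Q.leadingCoeff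

open Polynomial

private lemma dd4 (R : Polynomial ℝ) (hR : R.natDegree ≤ 3) (x1 x2 x3 x4 : ℝ)
    (h12 : x1 ≠ x2) (h13 : x1 ≠ x3) (h14 : x1 ≠ x4)
    (h23 : x2 ≠ x3) (h24 : x2 ≠ x4) (h34 : x3 ≠ x4) :
    R.coeff 3 = R.eval x1 / ((x1-x2)*(x1-x3)*(x1-x4))
      + R.eval x2 / ((x2-x1)*(x2-x3)*(x2-x4))
      + R.eval x3 / ((x3-x1)*(x3-x2)*(x3-x4))
      + R.eval x4 / ((x4-x1)*(x4-x2)*(x4-x3)) := by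
  have hev : ∀ x : ℝ, R.eval x
      = R.coeff 0 + R.coeff 1 * x + R.coeff 2 * x^2 + R.coeff 3 * x^3 := by
    intro x
    rw [Polynomial.eval_eq_sum_range' (Nat.lt_succ_of_le hR)]
    simp [Finset.sum_range_succ]
  rw [hev x1, hev x2, hev x3, hev x4]
  have d12 : x1 - x2 ≠ 0 := sub_ne_zero.mpr h12
  have d13 : x1 - x3 ≠ 0 := sub_ne_zero.mpr h13
  have d14 : x1 - x4 ≠ 0 := sub_ne_zero.mpr h14
  have d23 : x2 - x3 ≠ 0 := sub_ne_zero.mpr h23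
  have d24 : x2 - x4 ≠ 0 := sub_ne_zero.mpr h24
  have d34 : x3 - x4 ≠ 0 := sub_ne_zero.mpr h34
  have d21 : x2 - x1 ≠ 0 := sub_ne_zero.mpr h12.symm
  have d31 : x3 - x1 ≠ 0 := sub_ne_zero.mpr h13.symm
  have d41 : x4 - x1 ≠ 0 := sub_ne_zero.mpr h14.symm
  have d32 : x3 - x2 ≠ 0 := sub_ne_zero.mpr h23.symm
  have d42 : x4 - x2 ≠ 0 := sub_ne_zero.mpr h24.symm
  have d43 : x4 - x3 ≠ 0 := sub_ne_zero.mpr h34.symm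
  field_simp
  ring

private lemma key (S T W : ℝ) (hS : 1 ≤ S) (h1 : 2*S ≤ T + 1) (h2 : T ≤ 2*S + 2)
    (hW0 : 0 ≤ W) (hWT : W ≤ T)
    (htri : W = S ∨ W + 2 ≤ S ∨ S + 2 ≤ W) :
    |W * (W^2 - (S^2 - S*T + T^2))| ≤ S * T * (T - S) := by
  have hTS : S ≤ T := by linarith
  have hS0 : (0:ℝ) < S := by linarith
  rw [abs_le]
  constructor
  · rcases htri with h | h | h
    · have : W*(W^2 - (S^2 - S*T + T^2)) = -(S*T*(T-S)) := by rw [h]; ring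
      linarith
    · have hq : W^2 + S*W - T*(T-S) ≤ 0 := by
        nlinarith [mul_nonneg (by linarith : (0:ℝ) ≤ S - 2 - W) (by linarith : (0:ℝ) ≤ S - 2 + W),
          mul_nonneg hS0.le (by linarith : (0:ℝ) ≤ S - 2 - W),
          mul_nonneg (by linarith : (0:ℝ) ≤ T - (2*S - 1)) (by linarith : (0:ℝ) ≤ S - 1),
          mul_nonneg (by linarith : (0:ℝ) ≤ T - (2*S - 1)) (by linarith : (0:ℝ) ≤ 2*S - 1),
          sq_nonneg (T - (2*S - 1))]
      nlinarith [mul_nonneg (by linarith : (0:ℝ) ≤ S - W)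
        (by linarith : (0:ℝ) ≤ -(W^2 + S*W - T*(T-S)))]
    · have hq : (0:ℝ) ≤ W^2 + S*W - T*(T-S) := by
        nlinarith [mul_nonneg (by linarith : (0:ℝ) ≤ W - (S+2)) (by linarith : (0:ℝ) ≤ W + (S+2)),
          mul_nonneg hS0.le (by linarith : (0:ℝ) ≤ W - (S+2)),
          mul_nonneg (by linarith : (0:ℝ) ≤ 2*S + 2 - T) (by linarith : (0:ℝ) ≤ T - S),
          mul_nonneg (by linarith : (0:ℝ) ≤ 2*S + 2) (by linarith : (0:ℝ) ≤ (S+2) - (T-S))]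
      nlinarith [mul_nonneg (by linarith : (0:ℝ) ≤ W - S) hq]
  · have hq : (0:ℝ) ≤ W^2 + T*W + S*(T-S) := by
      nlinarith [sq_nonneg W, mul_nonneg (by linarith : (0:ℝ) ≤ T) hW0,
        mul_nonneg hS0.le (by linarith : (0:ℝ) ≤ T - S)]
    nlinarith [mul_nonneg (by linarith : (0:ℝ) ≤ T - W) hq]

private lemma term_le (e D M : ℝ) (hM : 0 < M) (habs : |D| = M) (he : |e| ≤ 1) :
    e / D ≤ 1 / M := by
  calc e / D ≤ |e / D| := le_abs_self _
    _ = |e| / M := by rw [abs_div, habs]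
    _ ≤ 1 / M := by gcongr

lemma master (k a b : ℕ) (ha : 1 ≤ a) (hb : 1 ≤ b)
    (hk : k = 2*a + b + 1) (hb1 : b ≤ 2*a + 1) (hb2 : 2*a ≤ b + 2)
    (Q : Polynomial ℝ) (hQ : IsExtremalOnRange 3 k Q) :
    Q.leadingCoeff = 4 / ((a:ℝ) * (b:ℝ) * (2*(a:ℝ) + (b:ℝ))) := by
  obtain ⟨hdeg, hbound, hext⟩ := hQ
  set A : ℝ := (a:ℝ) with hAdef
  set B : ℝ := (b:ℝ) with hBdef
  have hA : (1:ℝ) ≤ A := by rw [hAdef]; exact_mod_cast ha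
  have hB : (1:ℝ) ≤ B := by rw [hBdef]; exact_mod_cast hb
  have hA0 : (0:ℝ) < A := by linarith
  have hB0 : (0:ℝ) < B := by linarith
  have hkR : (k:ℝ) = 2*A + B + 1 := by rw [hk]; push_cast; ring
  have hQlc : Q.leadingCoeff = Q.coeff 3 := by rw [Polynomial.leadingCoeff, hdeg]
  -- upper bound
  have hup : Q.coeff 3 ≤ 4 / (A * B * (2*A + B)) := by
    have hdd := dd4 Q (le_of_eq hdeg) 1 (1+A) (1+A+B) (1+2*A+B)
      (by intro h; nlinarith) (by intro h; nlinarith) (by intro h; nlinarith)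
      (by intro h; nlinarith) (by intro h; nlinarith) (by intro h; nlinarith)
    have e1 := hbound 1 (by omega) (by omega)
    have e2 := hbound (1+a) (by omega) (by omega)
    have e3 := hbound (1+a+b) (by omega) (by omega)
    have e4 := hbound k (by omega) (by omega)
    push_cast at e1 e2 e3 e4
    rw [hkR, show (2*A+B+1 : ℝ) = 1+2*A+B from by ring] at e4
    have t1 : Q.eval 1 / ((1-(1+A))*(1-(1+A+B))*(1-(1+2*A+B))) ≤ 1/(A*(A+B)*(2*A+B)) := by
      apply term_le _ _ _ (by positivity) _ e1
      have h : (1-(1+A))*(1-(1+A+B))*(1-(1+2*A+B)) = -(A*(A+B)*(2*A+B)) := by ring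
      rw [h, abs_neg, abs_of_pos (by positivity)]
    have t2 : Q.eval (1+A) / ((1+A-1)*(1+A-(1+A+B))*(1+A-(1+2*A+B))) ≤ 1/(A*B*(A+B)) := by
      apply term_le _ _ _ (by positivity) _ e2
      have h : (1+A-1)*(1+A-(1+A+B))*(1+A-(1+2*A+B)) = A*B*(A+B) := by ring
      rw [h, abs_of_pos (by positivity)]
    have t3 : Q.eval (1+A+B) / ((1+A+B-1)*(1+A+B-(1+A))*(1+A+B-(1+2*A+B))) ≤ 1/(A*B*(A+B)) := by
      apply term_le _ _ _ (by positivity) _ e3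
      have h : (1+A+B-1)*(1+A+B-(1+A))*(1+A+B-(1+2*A+B)) = -(A*B*(A+B)) := by ring
      rw [h, abs_neg, abs_of_pos (by positivity)]
    have t4 : Q.eval (1+2*A+B) / ((1+2*A+B-1)*(1+2*A+B-(1+A))*(1+2*A+B-(1+A+B))) ≤ 1/(A*(A+B)*(2*A+B)) := by
      apply term_le _ _ _ (by positivity) _ e4
      have h : (1+2*A+B-1)*(1+2*A+B-(1+A))*(1+2*A+B-(1+A+B)) = A*(A+B)*(2*A+B) := by ring
      rw [h, abs_of_pos (by positivity)]
    have hsum : 1/(A*(A+B)*(2*A+B)) + 1/(A*B*(A+B)) + 1/(A*B*(A+B)) + 1/(A*(A+B)*(2*A+B))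
        = 4 / (A * B * (2*A + B)) := by
      field_simp
      ring
    rw [hdd]
    linarith
  -- lower bound: explicit polynomial
  set TT : ℝ := 2*A + B with hTTdef
  have hTT0 : (0:ℝ) < TT := by positivity
  have hTB : (0:ℝ) < TT - B := by simp [hTTdef]; positivity
  set ee : ℝ := TT + 2 with heedef
  set QQ : ℝ := B^2 - B*TT + TT^2 with hQQdef
  set RH : ℝ := B*TT*(TT-B) with hRHdef
  have hRH0 : (0:ℝ) < RH := by positivity
  set P : Polynomial ℝ := C (8/RH) * X^3 + C (-12*ee/RH) * X^2
      + C ((6*ee^2-2*QQ)/RH) * X + C ((QQ*ee - ee^3)/RH) with hPdef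
  have h8 : (8/RH : ℝ) ≠ 0 := by positivity
  have hP3 : P.natDegree = 3 := Polynomial.natDegree_cubic h8
  have hPl : P.leadingCoeff = 8/RH := Polynomial.leadingCoeff_cubic h8
  have hPev : ∀ x : ℝ, P.eval x = ((2*x-ee)^3 - QQ*(2*x-ee))/RH := by
    intro x
    simp [hPdef]
    field_simp
    ring
  have hPb : ∀ j : ℕ, 1 ≤ j → j ≤ k → |P.eval (j:ℝ)| ≤ 1 := by
    intro j hj1 hjk
    rw [hPev, abs_div, abs_of_pos hRH0, div_le_one hRH0]
    set u : ℤ := 2*(j:ℤ) - ((k:ℤ)+1) with hudef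
    have hu : ((u:ℤ):ℝ) = 2*(j:ℝ) - ee := by
      push_cast [hudef]
      rw [hkR]
      simp [heedef, hTTdef]
      ring
    have hpar : u - (b:ℤ) = 2*((j:ℤ) - (a:ℤ) - (b:ℤ) - 1) := by
      have : (k:ℤ) = 2*(a:ℤ) + (b:ℤ) + 1 := by exact_mod_cast congrArg (Nat.cast : ℕ → ℤ) hk
      rw [hudef, this]; ring
    have htri : (|u| = (b:ℤ) ∨ |u| + 2 ≤ (b:ℤ) ∨ (b:ℤ) + 2 ≤ |u|) := by
      rcases le_total 0 u with h | h
      · rw [abs_of_nonneg h]; omega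
      · rw [abs_of_nonpos h]; omega
    have hut : |u| ≤ (k:ℤ) - 1 := by
      have hj1' : (1:ℤ) ≤ (j:ℤ) := by exact_mod_cast hj1
      have hjk' : (j:ℤ) ≤ (k:ℤ) := by exact_mod_cast hjk
      rcases le_total 0 u with h | h
      · rw [abs_of_nonneg h]; omega
      · rw [abs_of_nonpos h]; omega
    have hb1R : 2*B ≤ TT + 1 := by
      have : (b:ℝ) ≤ 2*(a:ℝ) + 1 := by exact_mod_cast hb1
      simp [hTTdef]; linarith
    have hb2R : TT ≤ 2*B + 2 := by
      have : 2*(a:ℝ) ≤ (b:ℝ) + 2 := by exact_mod_cast hb2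
      simp [hTTdef]; linarith
    have hW0 : (0:ℝ) ≤ ((|u|:ℤ):ℝ) := by positivity
    have hWT : ((|u|:ℤ):ℝ) ≤ TT := by
      have h' : ((|u|:ℤ):ℝ) ≤ (k:ℝ) - 1 := by exact_mod_cast hut
      rw [hkR] at h'
      linarith
    have htriR : ((|u|:ℤ):ℝ) = B ∨ ((|u|:ℤ):ℝ) + 2 ≤ B ∨ B + 2 ≤ ((|u|:ℤ):ℝ) := by
      rcases htri with h | h | h
      · left; rw [hBdef]; exact_mod_cast h
      · right; left; rw [hBdef]; exact_mod_cast h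
      · right; right; rw [hBdef]; exact_mod_cast h
    have hkey := key B TT ((|u|:ℤ):ℝ) hB hb1R hb2R hW0 hWT htriR
    have hGW : |(2*(j:ℝ)-ee)^3 - QQ*(2*(j:ℝ)-ee)| = |((|u|:ℤ):ℝ) * (((|u|:ℤ):ℝ)^2 - (B^2 - B*TT + TT^2))| := by
      rw [← hu]
      rw [show ((u:ℤ):ℝ)^3 - QQ*((u:ℤ):ℝ) = ((u:ℤ):ℝ) * (((u:ℤ):ℝ)^2 - QQ) by ring] -- may need adjusting
      rw [abs_mul, abs_mul, Int.cast_abs, abs_abs, sq_abs, hQQdef]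
    rw [show (2*(j:ℝ)-ee)^3 - QQ*(2*(j:ℝ)-ee) = (2*(j:ℝ)-ee) * ((2*(j:ℝ)-ee)^2 - QQ) by ring] at hGW ⊢
    rw [hGW]
    calc _ ≤ B * TT * (TT - B) := hkey
      _ = RH := by rw [hRHdef]
  have hlow := hext P hP3 hPb
  rw [hPl] at hlow
  have hval : 8/RH = 4 / (A * B * (2*A + B)) := by
    rw [hRHdef, hTTdef]
    rw [div_eq_div_iff (by positivity) (by positivity)]
    ring
  rw [hval] at hlow
  rw [hQlc]
  linarith

theorem stmt_16 (k : ℕ) (hk : 3 < k) (Q : Polynomial ℝ) (hQ : IsExtremalOnRange 3 k Q) :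
    (k % 4 = 1 → Q.leadingCoeff = 32 / ((k : ℝ) - 1) ^ 3) ∧
    (k % 4 = 2 → Q.leadingCoeff = 32 / ((k : ℝ) * ((k : ℝ) - 1) * ((k : ℝ) - 2))) ∧
    (k % 4 = 3 → Q.leadingCoeff = 32 / (((k : ℝ) + 1) * ((k : ℝ) - 1) * ((k : ℝ) - 3))) ∧
    (k % 4 = 0 → Q.leadingCoeff = 32 / ((k : ℝ) * ((k : ℝ) - 1) * ((k : ℝ) - 2))) := by
  refine ⟨fun hr => ?_, fun hr => ?_, fun hr => ?_, fun hr => ?_⟩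
  · obtain ⟨m, hm1, rfl⟩ : ∃ m, 1 ≤ m ∧ k = 4*m+1 := ⟨k/4, by omega, by omega⟩
    rw [master (4*m+1) m (2*m) (by omega) (by omega) (by omega) (by omega) (by omega) Q hQ]
    have hm : (1:ℝ) ≤ (m:ℝ) := by exact_mod_cast hm1
    push_cast
    have h2 : (0:ℝ) < (4*(m:ℝ)+1-1)^3 := pow_pos (by linarith) 3
    rw [div_eq_div_iff (by positivity) (ne_of_gt h2)]
    ring
  · obtain ⟨m, hm1, rfl⟩ : ∃ m, 1 ≤ m ∧ k = 4*m+2 := ⟨k/4, by omega, by omega⟩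
    rw [master (4*m+2) m (2*m+1) (by omega) (by omega) (by omega) (by omega) (by omega) Q hQ]
    have hm : (1:ℝ) ≤ (m:ℝ) := by exact_mod_cast hm1
    push_cast
    have h2 : (0:ℝ) < (4*(m:ℝ)+2) * (4*(m:ℝ)+2-1) * (4*(m:ℝ)+2-2) :=
      mul_pos (mul_pos (by linarith) (by linarith)) (by linarith)
    rw [div_eq_div_iff (by positivity) (ne_of_gt h2)]
    ring
  · obtain ⟨m, hm1, rfl⟩ : ∃ m, 1 ≤ m ∧ k = 4*m+3 := ⟨k/4, by omega, by omega⟩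
    rw [master (4*m+3) (m+1) (2*m) (by omega) (by omega) (by omega) (by omega) (by omega) Q hQ]
    have hm : (1:ℝ) ≤ (m:ℝ) := by exact_mod_cast hm1
    push_cast
    have h2 : (0:ℝ) < (4*(m:ℝ)+3+1) * (4*(m:ℝ)+3-1) * (4*(m:ℝ)+3-3) :=
      mul_pos (mul_pos (by linarith) (by linarith)) (by linarith)
    rw [div_eq_div_iff (by positivity) (ne_of_gt h2)]
    ring
  · obtain ⟨m, rfl⟩ : ∃ m, k = 4*m+4 := ⟨k/4 - 1, by omega⟩
    rw [master (4*m+4) (m+1) (2*m+1) (by omega) (by omega) (by omega) (by omega) (by omega) Q hQ]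
    have hm : (0:ℝ) ≤ (m:ℝ) := by positivity
    push_cast
    have h2 : (0:ℝ) < (4*(m:ℝ)+4) * (4*(m:ℝ)+4-1) * (4*(m:ℝ)+4-2) :=
      mul_pos (mul_pos (by linarith) (by linarith)) (by linarith)
    rw [div_eq_div_iff (by positivity) (ne_of_gt h2)]
    ring
end

section
/- Let k > 3 be an integer and let Q be the real polynomial of degree 3 that is extremal for (3, {1,2,...,k}). Then for all real x, with y = ((k−1)/2)x + (k+1)/2: Q(y) = T_3(x) if k ≡ 1 (mod 4); Q(y) = T_3(x) + (4/(k(k−2)))(x^3 − x) if k ≡ 2 (mod 4); Q(y) = T_3(x) + (16/((k+1)(k−3)))(x^3 − x) if k ≡ 3 (mod 4); and Q(y) = T_3(x) + (4/(k(k−2)))(x^3 − x) if k ≡ 0 (mod 4), where T_3(x) = 4x^3 − 3x is the degree 3 Chebyshev polynomial of the first kind. -/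
set_option maxHeartbeats 1000000
open Polynomial


noncomputable def Pk (a b u g : ℝ) : ℝ[X] :=
  C (8*a/g^3) * X^3 + C (-(12*a*u)/g^3) * X^2 + C (6*a*u^2/g^3 + 2*b/g) * X
    + C (-(a*u^3)/g^3 - b*u/g)

lemma Pk_eval (a b u g : ℝ) (hg : g ≠ 0) (x : ℝ) :
    (Pk a b u g).eval x = a * ((2*x-u)/g)^3 + b * ((2*x-u)/g) := by
  simp only [Pk, eval_add, eval_mul, eval_pow, eval_C, eval_X]
  field_simp
  ring

lemma Pk_natDegree (a b u g : ℝ) (ha : a ≠ 0) (hg : g ≠ 0) : (Pk a b u g).natDegree = 3 := by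
  unfold Pk
  have h8 : 8*a/g^3 ≠ 0 := div_ne_zero (mul_ne_zero (by norm_num) ha) (pow_ne_zero 3 hg)
  compute_degree!

lemma consec (z : ℤ) : 0 ≤ z * (z - 1) := by
  rcases le_or_gt z 0 with h | h
  · nlinarith
  · nlinarith


lemma lagrange_coeff3 (t1 t2 t3 t4 : ℝ) (h12 : t1 ≠ t2) (h13 : t1 ≠ t3) (h14 : t1 ≠ t4)
    (h23 : t2 ≠ t3) (h24 : t2 ≠ t4) (h34 : t3 ≠ t4) (R : ℝ[X]) (hR : R.natDegree ≤ 3) :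
    R.coeff 3 = R.eval t1 / ((t1-t2)*(t1-t3)*(t1-t4))
              + R.eval t2 / ((t2-t1)*(t2-t3)*(t2-t4))
              + R.eval t3 / ((t3-t1)*(t3-t2)*(t3-t4))
              + R.eval t4 / ((t4-t1)*(t4-t2)*(t4-t3)) := by
  have h : ∀ x : ℝ, R.eval x = R.coeff 0 + R.coeff 1 * x + R.coeff 2 * x^2 + R.coeff 3 * x^3 := by
    intro x
    rw [eval_eq_sum_range' (lt_of_le_of_lt hR (by norm_num : (3:ℕ) < 4))]
    simp only [Finset.sum_range_succ, Finset.sum_range_zero]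
    ring
  rw [h t1, h t2, h t3, h t4]
  have e12 : t1 - t2 ≠ 0 := sub_ne_zero.mpr h12
  have e13 : t1 - t3 ≠ 0 := sub_ne_zero.mpr h13
  have e14 : t1 - t4 ≠ 0 := sub_ne_zero.mpr h14
  have e23 : t2 - t3 ≠ 0 := sub_ne_zero.mpr h23
  have e24 : t2 - t4 ≠ 0 := sub_ne_zero.mpr h24
  have e34 : t3 - t4 ≠ 0 := sub_ne_zero.mpr h34
  have e21 : t2 - t1 ≠ 0 := sub_ne_zero.mpr h12.symm
  have e31 : t3 - t1 ≠ 0 := sub_ne_zero.mpr h13.symm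
  have e41 : t4 - t1 ≠ 0 := sub_ne_zero.mpr h14.symm
  have e32 : t3 - t2 ≠ 0 := sub_ne_zero.mpr h23.symm
  have e42 : t4 - t2 ≠ 0 := sub_ne_zero.mpr h24.symm
  have e43 : t4 - t3 ≠ 0 := sub_ne_zero.mpr h34.symm
  field_simp
  ring

lemma extremal_eq (k : ℕ) (Q P : ℝ[X]) (hQ : IsExtremalOnRange 3 k Q)
    (n1 n2 n3 n4 : ℕ) (h1 : 1 ≤ n1) (h12 : n1 < n2) (h23 : n2 < n3) (h34 : n3 < n4)
    (h4 : n4 ≤ k) (hP : P.natDegree = 3)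
    (hPb : ∀ j : ℕ, 1 ≤ j → j ≤ k → |P.eval (j : ℝ)| ≤ 1)
    (e1 : P.eval (n1 : ℝ) = -1) (e2 : P.eval (n2 : ℝ) = 1)
    (e3 : P.eval (n3 : ℝ) = -1) (e4 : P.eval (n4 : ℝ) = 1) : Q = P := by
  obtain ⟨hQd, hQb, hQmax⟩ := hQ
  set t1 : ℝ := (n1 : ℝ)
  set t2 : ℝ := (n2 : ℝ)
  set t3 : ℝ := (n3 : ℝ)
  set t4 : ℝ := (n4 : ℝ)
  have r12 : t1 < t2 := Nat.cast_lt.mpr h12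
  have r23 : t2 < t3 := Nat.cast_lt.mpr h23
  have r34 : t3 < t4 := Nat.cast_lt.mpr h34
  have r13 : t1 < t3 := r12.trans r23
  have r14 : t1 < t4 := r13.trans r34
  have r24 : t2 < t4 := r23.trans r34
  have LQ := lagrange_coeff3 t1 t2 t3 t4 r12.ne r13.ne r14.ne r23.ne r24.ne r34.ne Q hQd.le
  have LP := lagrange_coeff3 t1 t2 t3 t4 r12.ne r13.ne r14.ne r23.ne r24.ne r34.ne P hP.le
  -- bounds on Q at the nodes
  have b1 := hQb n1 h1 (le_trans (le_of_lt (h12.trans (h23.trans h34))) h4)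
  have b2 := hQb n2 (le_trans h1 h12.le) (le_trans (h23.trans h34).le h4)
  have b3 := hQb n3 (le_trans h1 (h12.trans h23).le) (le_trans h34.le h4)
  have b4 := hQb n4 (le_trans h1 (h12.trans (h23.trans h34)).le) h4
  rw [abs_le] at b1 b2 b3 b4
  have hle : P.leadingCoeff ≤ Q.leadingCoeff := hQmax P hP hPb
  have hlcQ : Q.leadingCoeff = Q.coeff 3 := by rw [Polynomial.leadingCoeff, hQd]
  have hlcP : P.leadingCoeff = P.coeff 3 := by rw [Polynomial.leadingCoeff, hP]
  rw [hlcQ, hlcP] at hle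
  set d1 : ℝ := (t1-t2)*(t1-t3)*(t1-t4) with hd1
  set d2 : ℝ := (t2-t1)*(t2-t3)*(t2-t4) with hd2
  set d3 : ℝ := (t3-t1)*(t3-t2)*(t3-t4) with hd3
  set d4 : ℝ := (t4-t1)*(t4-t2)*(t4-t3) with hd4
  have hd1n : d1 < 0 := by
    rw [hd1]
    exact mul_neg_of_pos_of_neg (mul_pos_of_neg_of_neg (sub_neg.mpr r12) (sub_neg.mpr r13))
      (sub_neg.mpr r14)
  have hd2p : 0 < d2 := by
    rw [hd2]
    exact mul_pos_of_neg_of_neg (mul_neg_of_pos_of_neg (sub_pos.mpr r12) (sub_neg.mpr r23))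
      (sub_neg.mpr r24)
  have hd3n : d3 < 0 := by
    rw [hd3]
    exact mul_neg_of_pos_of_neg (mul_pos (sub_pos.mpr r13) (sub_pos.mpr r23)) (sub_neg.mpr r34)
  have hd4p : 0 < d4 := by
    rw [hd4]
    exact mul_pos (mul_pos (sub_pos.mpr r14) (sub_pos.mpr r24)) (sub_pos.mpr r34)
  rw [e1, e2, e3, e4] at LP
  have i1n : d1⁻¹ < 0 := inv_lt_zero.mpr hd1n
  have i2p : 0 < d2⁻¹ := inv_pos.mpr hd2p
  have i3n : d3⁻¹ < 0 := inv_lt_zero.mpr hd3n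
  have i4p : 0 < d4⁻¹ := inv_pos.mpr hd4p
  rw [div_eq_mul_inv, div_eq_mul_inv, div_eq_mul_inv, div_eq_mul_inv] at LQ LP
  have k1 : eval t1 Q * d1⁻¹ ≤ (-1) * d1⁻¹ := mul_le_mul_of_nonpos_right b1.1 i1n.le
  have k2 : eval t2 Q * d2⁻¹ ≤ 1 * d2⁻¹ := mul_le_mul_of_nonneg_right b2.2 i2p.le
  have k3 : eval t3 Q * d3⁻¹ ≤ (-1) * d3⁻¹ := mul_le_mul_of_nonpos_right b3.1 i3n.le
  have k4 : eval t4 Q * d4⁻¹ ≤ 1 * d4⁻¹ := mul_le_mul_of_nonneg_right b4.2 i4p.le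
  have q1 : eval t1 Q = -1 := by
    have h0 : (eval t1 Q - (-1)) * d1⁻¹ = 0 := by linarith
    rcases mul_eq_zero.mp h0 with h | h
    · linarith [sub_eq_zero.mp h]
    · exact absurd h (inv_ne_zero hd1n.ne)
  have q2 : eval t2 Q = 1 := by
    have h0 : (eval t2 Q - 1) * d2⁻¹ = 0 := by linarith
    rcases mul_eq_zero.mp h0 with h | h
    · linarith [sub_eq_zero.mp h]
    · exact absurd h (inv_ne_zero hd2p.ne')
  have q3 : eval t3 Q = -1 := by
    have h0 : (eval t3 Q - (-1)) * d3⁻¹ = 0 := by linarith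
    rcases mul_eq_zero.mp h0 with h | h
    · linarith [sub_eq_zero.mp h]
    · exact absurd h (inv_ne_zero hd3n.ne)
  have q4 : eval t4 Q = 1 := by
    have h0 : (eval t4 Q - 1) * d4⁻¹ = 0 := by linarith
    rcases mul_eq_zero.mp h0 with h | h
    · linarith [sub_eq_zero.mp h]
    · exact absurd h (inv_ne_zero hd4p.ne')
  have hsub : Q - P = 0 := by
    apply Polynomial.eq_zero_of_natDegree_lt_card_of_eval_eq_zero' (Q - P) {t1, t2, t3, t4}
    · intro i hi
      simp only [Finset.mem_insert, Finset.mem_singleton] at hi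
      rcases hi with rfl | rfl | rfl | rfl <;>
        simp [Polynomial.eval_sub, q1, q2, q3, q4, e1, e2, e3, e4]
    · have hcard : ({t1, t2, t3, t4} : Finset ℝ).card = 4 := by
        rw [Finset.card_insert_of_notMem (by simp [r12.ne, r13.ne, r14.ne]),
          Finset.card_insert_of_notMem (by simp [r23.ne, r24.ne]),
          Finset.card_insert_of_notMem (by simp [r34.ne]), Finset.card_singleton]
      rw [hcard]
      calc (Q - P).natDegree ≤ max Q.natDegree P.natDegree := Polynomial.natDegree_sub_le Q P
        _ < 4 := by rw [hQd, hP]; norm_num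
  exact sub_eq_zero.mp hsub

theorem stmt_19 (k : ℕ) (hk : 3 < k) (Q : Polynomial ℝ) (hQ : IsExtremalOnRange 3 k Q) :
    (k % 4 = 1 → ∀ x : ℝ,
      Q.eval ((((k : ℝ) - 1) / 2) * x + ((k : ℝ) + 1) / 2) = 4 * x ^ 3 - 3 * x) ∧
    (k % 4 = 2 → ∀ x : ℝ,
      Q.eval ((((k : ℝ) - 1) / 2) * x + ((k : ℝ) + 1) / 2) =
        (4 * x ^ 3 - 3 * x) + (4 / ((k : ℝ) * ((k : ℝ) - 2))) * (x ^ 3 - x)) ∧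
    (k % 4 = 3 → ∀ x : ℝ,
      Q.eval ((((k : ℝ) - 1) / 2) * x + ((k : ℝ) + 1) / 2) =
        (4 * x ^ 3 - 3 * x) + (16 / (((k : ℝ) + 1) * ((k : ℝ) - 3))) * (x ^ 3 - x)) ∧
    (k % 4 = 0 → ∀ x : ℝ,
      Q.eval ((((k : ℝ) - 1) / 2) * x + ((k : ℝ) + 1) / 2) =
        (4 * x ^ 3 - 3 * x) + (4 / ((k : ℝ) * ((k : ℝ) - 2))) * (x ^ 3 - x)) := by
  refine ⟨?_, ?_, ?_, ?_⟩
  · intro hr x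
    obtain ⟨m, hm⟩ : ∃ m, k = 4*m+1 := ⟨k/4, by omega⟩
    have hm1 : 1 ≤ m := by omega
    have hmR : (1:ℝ) ≤ (m:ℝ) := by exact_mod_cast hm1
    have hkR : (k:ℝ) = 4*(m:ℝ)+1 := by rw [hm]; push_cast; ring
    have hk1 : (1:ℝ) < (k:ℝ) := by rw [hkR]; linarith
    have hg : (k:ℝ) - 1 ≠ 0 := by linarith
    have hgp : (0:ℝ) < (k:ℝ) - 1 := by linarith
    have hD : (0:ℝ) < ((k:ℝ)-1)^3 := pow_pos hgp 3
    have ha : (4:ℝ) ≠ 0 := by norm_num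
    set P := Pk (4:ℝ) (-3:ℝ) ((k:ℝ)+1) ((k:ℝ)-1) with hPdef
    have heval := Pk_eval (4:ℝ) (-3:ℝ) ((k:ℝ)+1) ((k:ℝ)-1) hg
    have hdeg := Pk_natDegree (4:ℝ) (-3:ℝ) ((k:ℝ)+1) ((k:ℝ)-1) ha hg
    have id1 : ∀ y : ℝ, 1 - P.eval y = 2*((k:ℝ)-y)*(4*y-(k:ℝ)-3)^2/((k:ℝ)-1)^3 := by
      intro y; rw [heval]; field_simp; ring
    have id2 : ∀ y : ℝ, 1 + P.eval y = 2*(y-1)*(4*y-3*(k:ℝ)-1)^2/((k:ℝ)-1)^3 := by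
      intro y; rw [heval]; field_simp; ring
    have hbnd : ∀ j : ℕ, 1 ≤ j → j ≤ k → |P.eval (j:ℝ)| ≤ 1 := by
      intro j hj1 hjk
      have hj1R : (1:ℝ) ≤ (j:ℝ) := by exact_mod_cast hj1
      have hjkR : (j:ℝ) ≤ (k:ℝ) := by exact_mod_cast hjk
      have key1 : (0:ℝ) ≤ (4*(j:ℝ)-(k:ℝ)-3)^2 := sq_nonneg _
      have key2 : (0:ℝ) ≤ (4*(j:ℝ)-3*(k:ℝ)-1)^2 := sq_nonneg _
      rw [abs_le]
      constructor
      · have h0 : 0 ≤ 2*((j:ℝ)-1)*(4*(j:ℝ)-3*(k:ℝ)-1)^2/((k:ℝ)-1)^3 :=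
          div_nonneg (by nlinarith) hD.le
        linarith [id2 (j:ℝ)]
      · have h0 : 0 ≤ 2*((k:ℝ)-(j:ℝ))*(4*(j:ℝ)-(k:ℝ)-3)^2/((k:ℝ)-1)^3 :=
          div_nonneg (by nlinarith) hD.le
        linarith [id1 (j:ℝ)]
    have hQP : Q = P := by
      apply extremal_eq k Q P hQ 1 (m+1) (3*m+1) k le_rfl (by omega) (by omega) (by omega)
        le_rfl hdeg hbnd
      · have hz : (((1:ℕ)):ℝ) - 1 = 0 := by norm_num
        have h := id2 (((1:ℕ)):ℝ)
        rw [show (2*((((1:ℕ)):ℝ)-1)*(4*(((1:ℕ)):ℝ)-3*(k:ℝ)-1)^2) = 0 from by push_cast; ring] at h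
        rw [zero_div] at h; linarith
      · have h := id1 (((m+1:ℕ)):ℝ)
        rw [show (2*((k:ℝ)-(((m+1:ℕ)):ℝ))*(4*(((m+1:ℕ)):ℝ)-(k:ℝ)-3)^2) = 0 from by
          have hz : 4*(((m+1:ℕ)):ℝ)-(k:ℝ)-3 = 0 := by push_cast; rw [hkR]; ring
          rw [hz]; ring] at h
        rw [zero_div] at h; linarith
      · have h := id2 (((3*m+1:ℕ)):ℝ)
        rw [show (2*((((3*m+1:ℕ)):ℝ)-1)*(4*(((3*m+1:ℕ)):ℝ)-3*(k:ℝ)-1)^2) = 0 from by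
          have hz : 4*(((3*m+1:ℕ)):ℝ)-3*(k:ℝ)-1 = 0 := by push_cast; rw [hkR]; ring
          rw [hz]; ring] at h
        rw [zero_div] at h; linarith
      · have h := id1 (((k:ℕ)):ℝ)
        rw [show (2*((k:ℝ)-(((k:ℕ)):ℝ))*(4*(((k:ℕ)):ℝ)-(k:ℝ)-3)^2) = 0 from by push_cast; ring] at h
        rw [zero_div] at h; linarith
    rw [hQP, heval]
    field_simp
    ring
  · intro hr x
    obtain ⟨m, hm⟩ : ∃ m, k = 4*m+2 := ⟨k/4, by omega⟩
    have hm1 : 1 ≤ m := by omega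
    have hmR : (1:ℝ) ≤ (m:ℝ) := by exact_mod_cast hm1
    have hkR : (k:ℝ) = 4*(m:ℝ)+2 := by rw [hm]; push_cast; ring
    have hk1 : (1:ℝ) < (k:ℝ) := by rw [hkR]; linarith
    have hg : (k:ℝ) - 1 ≠ 0 := by linarith
    have hgp : (0:ℝ) < (k:ℝ) - 1 := by linarith
    have hk0 : (k:ℝ) ≠ 0 := by linarith
    have hk2 : (k:ℝ) - 2 ≠ 0 := by rw [hkR]; nlinarith
    have hk2p : (0:ℝ) < (k:ℝ) - 2 := by rw [hkR]; nlinarith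
    have hD : (0:ℝ) < (((k:ℝ)-1)*(k:ℝ)*((k:ℝ)-2)) := mul_pos (mul_pos hgp (by linarith)) hk2p
    have hkk2 : (0:ℝ) < (k:ℝ)*((k:ℝ)-2) := by nlinarith
    have ha : (4 + 4/((k:ℝ)*((k:ℝ)-2))) ≠ 0 := by positivity
    set P := Pk (4 + 4/((k:ℝ)*((k:ℝ)-2))) (-(3 + 4/((k:ℝ)*((k:ℝ)-2)))) ((k:ℝ)+1) ((k:ℝ)-1) with hPdef
    have heval := Pk_eval (4 + 4/((k:ℝ)*((k:ℝ)-2))) (-(3 + 4/((k:ℝ)*((k:ℝ)-2)))) ((k:ℝ)+1) ((k:ℝ)-1) hg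
    have hdeg := Pk_natDegree (4 + 4/((k:ℝ)*((k:ℝ)-2))) (-(3 + 4/((k:ℝ)*((k:ℝ)-2)))) ((k:ℝ)+1) ((k:ℝ)-1) ha hg
    have id1 : ∀ y : ℝ, 1 - P.eval y = 2*((k:ℝ)-y)*(4*y-(k:ℝ)-2)*(4*y-(k:ℝ)-4)/(((k:ℝ)-1)*(k:ℝ)*((k:ℝ)-2)) := by
      intro y; rw [heval]; field_simp; ring
    have id2 : ∀ y : ℝ, 1 + P.eval y = 2*(y-1)*(3*(k:ℝ)+2-4*y)*(3*(k:ℝ)-4*y)/(((k:ℝ)-1)*(k:ℝ)*((k:ℝ)-2)) := by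
      intro y; rw [heval]; field_simp; ring
    have hbnd : ∀ j : ℕ, 1 ≤ j → j ≤ k → |P.eval (j:ℝ)| ≤ 1 := by
      intro j hj1 hjk
      have hj1R : (1:ℝ) ≤ (j:ℝ) := by exact_mod_cast hj1
      have hjkR : (j:ℝ) ≤ (k:ℝ) := by exact_mod_cast hjk
      have key1 : (0:ℝ) ≤ (4*(j:ℝ)-(k:ℝ)-2)*(4*(j:ℝ)-(k:ℝ)-4) := by
            have h := consec (2*(j:ℤ)-2*(m:ℤ)-2)
            have hkZ : (k:ℤ) = 4*(m:ℤ)+2 := by exact_mod_cast hm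
            have : (0:ℤ) ≤ (4*(j:ℤ)-(k:ℤ)-2)*(4*(j:ℤ)-(k:ℤ)-4) := by nlinarith
            exact_mod_cast this
      have key2 : (0:ℝ) ≤ (3*(k:ℝ)+2-4*(j:ℝ))*(3*(k:ℝ)-4*(j:ℝ)) := by
            have h := consec (6*(m:ℤ)+4-2*(j:ℤ))
            have hkZ : (k:ℤ) = 4*(m:ℤ)+2 := by exact_mod_cast hm
            have : (0:ℤ) ≤ (3*(k:ℤ)+2-4*(j:ℤ))*(3*(k:ℤ)-4*(j:ℤ)) := by nlinarith
            exact_mod_cast this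
      rw [abs_le]
      constructor
      · have h0 : 0 ≤ 2*((j:ℝ)-1)*(3*(k:ℝ)+2-4*(j:ℝ))*(3*(k:ℝ)-4*(j:ℝ))/(((k:ℝ)-1)*(k:ℝ)*((k:ℝ)-2)) :=
          div_nonneg (by nlinarith) hD.le
        linarith [id2 (j:ℝ)]
      · have h0 : 0 ≤ 2*((k:ℝ)-(j:ℝ))*(4*(j:ℝ)-(k:ℝ)-2)*(4*(j:ℝ)-(k:ℝ)-4)/(((k:ℝ)-1)*(k:ℝ)*((k:ℝ)-2)) :=
          div_nonneg (by nlinarith) hD.le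
        linarith [id1 (j:ℝ)]
    have hQP : Q = P := by
      apply extremal_eq k Q P hQ 1 (m+1) (3*m+2) k le_rfl (by omega) (by omega) (by omega)
        le_rfl hdeg hbnd
      · have hz : (((1:ℕ)):ℝ) - 1 = 0 := by norm_num
        have h := id2 (((1:ℕ)):ℝ)
        rw [show (2*((((1:ℕ)):ℝ)-1)*(3*(k:ℝ)+2-4*(((1:ℕ)):ℝ))*(3*(k:ℝ)-4*(((1:ℕ)):ℝ))) = 0 from by push_cast; ring] at h
        rw [zero_div] at h; linarith
      · have h := id1 (((m+1:ℕ)):ℝ)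
        rw [show (2*((k:ℝ)-(((m+1:ℕ)):ℝ))*(4*(((m+1:ℕ)):ℝ)-(k:ℝ)-2)*(4*(((m+1:ℕ)):ℝ)-(k:ℝ)-4)) = 0 from by
          have hz : 4*(((m+1:ℕ)):ℝ)-(k:ℝ)-2 = 0 := by push_cast; rw [hkR]; ring
          rw [hz]; ring] at h
        rw [zero_div] at h; linarith
      · have h := id2 (((3*m+2:ℕ)):ℝ)
        rw [show (2*((((3*m+2:ℕ)):ℝ)-1)*(3*(k:ℝ)+2-4*(((3*m+2:ℕ)):ℝ))*(3*(k:ℝ)-4*(((3*m+2:ℕ)):ℝ))) = 0 from by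
          have hz : 3*(k:ℝ)+2-4*(((3*m+2:ℕ)):ℝ) = 0 := by push_cast; rw [hkR]; ring
          rw [hz]; ring] at h
        rw [zero_div] at h; linarith
      · have h := id1 (((k:ℕ)):ℝ)
        rw [show (2*((k:ℝ)-(((k:ℕ)):ℝ))*(4*(((k:ℕ)):ℝ)-(k:ℝ)-2)*(4*(((k:ℕ)):ℝ)-(k:ℝ)-4)) = 0 from by push_cast; ring] at h
        rw [zero_div] at h; linarith
    rw [hQP, heval]
    field_simp
    ring
  · intro hr x
    obtain ⟨m, hm⟩ : ∃ m, k = 4*m+3 := ⟨k/4, by omega⟩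
    have hm1 : 1 ≤ m := by omega
    have hmR : (1:ℝ) ≤ (m:ℝ) := by exact_mod_cast hm1
    have hkR : (k:ℝ) = 4*(m:ℝ)+3 := by rw [hm]; push_cast; ring
    have hk1 : (1:ℝ) < (k:ℝ) := by rw [hkR]; linarith
    have hg : (k:ℝ) - 1 ≠ 0 := by linarith
    have hgp : (0:ℝ) < (k:ℝ) - 1 := by linarith
    have hk3p : (0:ℝ) < (k:ℝ) - 3 := by rw [hkR]; nlinarith
    have hk3 : (k:ℝ) - 3 ≠ 0 := ne_of_gt hk3p
    have hkp1 : (k:ℝ) + 1 ≠ 0 := by linarith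
    have hD : (0:ℝ) < (((k:ℝ)-1)*((k:ℝ)+1)*((k:ℝ)-3)) := mul_pos (mul_pos hgp (by linarith)) hk3p
    have hkk2 : (0:ℝ) < ((k:ℝ)+1)*((k:ℝ)-3) := by nlinarith
    have ha : (4 + 16/(((k:ℝ)+1)*((k:ℝ)-3))) ≠ 0 := by positivity
    set P := Pk (4 + 16/(((k:ℝ)+1)*((k:ℝ)-3))) (-(3 + 16/(((k:ℝ)+1)*((k:ℝ)-3)))) ((k:ℝ)+1) ((k:ℝ)-1) with hPdef
    have heval := Pk_eval (4 + 16/(((k:ℝ)+1)*((k:ℝ)-3))) (-(3 + 16/(((k:ℝ)+1)*((k:ℝ)-3)))) ((k:ℝ)+1) ((k:ℝ)-1) hg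
    have hdeg := Pk_natDegree (4 + 16/(((k:ℝ)+1)*((k:ℝ)-3))) (-(3 + 16/(((k:ℝ)+1)*((k:ℝ)-3)))) ((k:ℝ)+1) ((k:ℝ)-1) ha hg
    have id1 : ∀ y : ℝ, 1 - P.eval y = 2*((k:ℝ)-y)*(4*y-(k:ℝ)-1)*(4*y-(k:ℝ)-5)/(((k:ℝ)-1)*((k:ℝ)+1)*((k:ℝ)-3)) := by
      intro y; rw [heval]; field_simp; ring
    have id2 : ∀ y : ℝ, 1 + P.eval y = 2*(y-1)*(3*(k:ℝ)+3-4*y)*(3*(k:ℝ)-1-4*y)/(((k:ℝ)-1)*((k:ℝ)+1)*((k:ℝ)-3)) := by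
      intro y; rw [heval]; field_simp; ring
    have hbnd : ∀ j : ℕ, 1 ≤ j → j ≤ k → |P.eval (j:ℝ)| ≤ 1 := by
      intro j hj1 hjk
      have hj1R : (1:ℝ) ≤ (j:ℝ) := by exact_mod_cast hj1
      have hjkR : (j:ℝ) ≤ (k:ℝ) := by exact_mod_cast hjk
      have key1 : (0:ℝ) ≤ (4*(j:ℝ)-(k:ℝ)-1)*(4*(j:ℝ)-(k:ℝ)-5) := by
            have h := consec ((j:ℤ)-(m:ℤ)-1)
            have hkZ : (k:ℤ) = 4*(m:ℤ)+3 := by exact_mod_cast hm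
            have : (0:ℤ) ≤ (4*(j:ℤ)-(k:ℤ)-1)*(4*(j:ℤ)-(k:ℤ)-5) := by nlinarith
            exact_mod_cast this
      have key2 : (0:ℝ) ≤ (3*(k:ℝ)+3-4*(j:ℝ))*(3*(k:ℝ)-1-4*(j:ℝ)) := by
            have h := consec (3*(m:ℤ)+3-(j:ℤ))
            have hkZ : (k:ℤ) = 4*(m:ℤ)+3 := by exact_mod_cast hm
            have : (0:ℤ) ≤ (3*(k:ℤ)+3-4*(j:ℤ))*(3*(k:ℤ)-1-4*(j:ℤ)) := by nlinarith
            exact_mod_cast this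
      rw [abs_le]
      constructor
      · have h0 : 0 ≤ 2*((j:ℝ)-1)*(3*(k:ℝ)+3-4*(j:ℝ))*(3*(k:ℝ)-1-4*(j:ℝ))/(((k:ℝ)-1)*((k:ℝ)+1)*((k:ℝ)-3)) :=
          div_nonneg (by nlinarith) hD.le
        linarith [id2 (j:ℝ)]
      · have h0 : 0 ≤ 2*((k:ℝ)-(j:ℝ))*(4*(j:ℝ)-(k:ℝ)-1)*(4*(j:ℝ)-(k:ℝ)-5)/(((k:ℝ)-1)*((k:ℝ)+1)*((k:ℝ)-3)) :=
          div_nonneg (by nlinarith) hD.le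
        linarith [id1 (j:ℝ)]
    have hQP : Q = P := by
      apply extremal_eq k Q P hQ 1 (m+1) (3*m+3) k le_rfl (by omega) (by omega) (by omega)
        le_rfl hdeg hbnd
      · have hz : (((1:ℕ)):ℝ) - 1 = 0 := by norm_num
        have h := id2 (((1:ℕ)):ℝ)
        rw [show (2*((((1:ℕ)):ℝ)-1)*(3*(k:ℝ)+3-4*(((1:ℕ)):ℝ))*(3*(k:ℝ)-1-4*(((1:ℕ)):ℝ))) = 0 from by push_cast; ring] at h
        rw [zero_div] at h; linarith
      · have h := id1 (((m+1:ℕ)):ℝ)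
        rw [show (2*((k:ℝ)-(((m+1:ℕ)):ℝ))*(4*(((m+1:ℕ)):ℝ)-(k:ℝ)-1)*(4*(((m+1:ℕ)):ℝ)-(k:ℝ)-5)) = 0 from by
          have hz : 4*(((m+1:ℕ)):ℝ)-(k:ℝ)-1 = 0 := by push_cast; rw [hkR]; ring
          rw [hz]; ring] at h
        rw [zero_div] at h; linarith
      · have h := id2 (((3*m+3:ℕ)):ℝ)
        rw [show (2*((((3*m+3:ℕ)):ℝ)-1)*(3*(k:ℝ)+3-4*(((3*m+3:ℕ)):ℝ))*(3*(k:ℝ)-1-4*(((3*m+3:ℕ)):ℝ))) = 0 from by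
          have hz : 3*(k:ℝ)+3-4*(((3*m+3:ℕ)):ℝ) = 0 := by push_cast; rw [hkR]; ring
          rw [hz]; ring] at h
        rw [zero_div] at h; linarith
      · have h := id1 (((k:ℕ)):ℝ)
        rw [show (2*((k:ℝ)-(((k:ℕ)):ℝ))*(4*(((k:ℕ)):ℝ)-(k:ℝ)-1)*(4*(((k:ℕ)):ℝ)-(k:ℝ)-5)) = 0 from by push_cast; ring] at h
        rw [zero_div] at h; linarith
    rw [hQP, heval]
    field_simp
    ring
  · intro hr x
    obtain ⟨m, hm⟩ : ∃ m, k = 4*m := ⟨k/4, by omega⟩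
    have hm1 : 1 ≤ m := by omega
    have hmR : (1:ℝ) ≤ (m:ℝ) := by exact_mod_cast hm1
    have hkR : (k:ℝ) = 4*(m:ℝ) := by rw [hm]; push_cast; ring
    have hk1 : (1:ℝ) < (k:ℝ) := by rw [hkR]; linarith
    have hg : (k:ℝ) - 1 ≠ 0 := by linarith
    have hgp : (0:ℝ) < (k:ℝ) - 1 := by linarith
    have hk0 : (k:ℝ) ≠ 0 := by linarith
    have hk2 : (k:ℝ) - 2 ≠ 0 := by rw [hkR]; nlinarith
    have hk2p : (0:ℝ) < (k:ℝ) - 2 := by rw [hkR]; nlinarith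
    have hD : (0:ℝ) < (((k:ℝ)-1)*(k:ℝ)*((k:ℝ)-2)) := mul_pos (mul_pos hgp (by linarith)) hk2p
    have hkk2 : (0:ℝ) < (k:ℝ)*((k:ℝ)-2) := by nlinarith
    have ha : (4 + 4/((k:ℝ)*((k:ℝ)-2))) ≠ 0 := by positivity
    set P := Pk (4 + 4/((k:ℝ)*((k:ℝ)-2))) (-(3 + 4/((k:ℝ)*((k:ℝ)-2)))) ((k:ℝ)+1) ((k:ℝ)-1) with hPdef
    have heval := Pk_eval (4 + 4/((k:ℝ)*((k:ℝ)-2))) (-(3 + 4/((k:ℝ)*((k:ℝ)-2)))) ((k:ℝ)+1) ((k:ℝ)-1) hg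
    have hdeg := Pk_natDegree (4 + 4/((k:ℝ)*((k:ℝ)-2))) (-(3 + 4/((k:ℝ)*((k:ℝ)-2)))) ((k:ℝ)+1) ((k:ℝ)-1) ha hg
    have id1 : ∀ y : ℝ, 1 - P.eval y = 2*((k:ℝ)-y)*(4*y-(k:ℝ)-2)*(4*y-(k:ℝ)-4)/(((k:ℝ)-1)*(k:ℝ)*((k:ℝ)-2)) := by
      intro y; rw [heval]; field_simp; ring
    have id2 : ∀ y : ℝ, 1 + P.eval y = 2*(y-1)*(3*(k:ℝ)+2-4*y)*(3*(k:ℝ)-4*y)/(((k:ℝ)-1)*(k:ℝ)*((k:ℝ)-2)) := by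
      intro y; rw [heval]; field_simp; ring
    have hbnd : ∀ j : ℕ, 1 ≤ j → j ≤ k → |P.eval (j:ℝ)| ≤ 1 := by
      intro j hj1 hjk
      have hj1R : (1:ℝ) ≤ (j:ℝ) := by exact_mod_cast hj1
      have hjkR : (j:ℝ) ≤ (k:ℝ) := by exact_mod_cast hjk
      have key1 : (0:ℝ) ≤ (4*(j:ℝ)-(k:ℝ)-2)*(4*(j:ℝ)-(k:ℝ)-4) := by
            have h := consec (2*(j:ℤ)-2*(m:ℤ)-1)
            have hkZ : (k:ℤ) = 4*(m:ℤ) := by exact_mod_cast hm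
            have : (0:ℤ) ≤ (4*(j:ℤ)-(k:ℤ)-2)*(4*(j:ℤ)-(k:ℤ)-4) := by nlinarith
            exact_mod_cast this
      have key2 : (0:ℝ) ≤ (3*(k:ℝ)+2-4*(j:ℝ))*(3*(k:ℝ)-4*(j:ℝ)) := by
            have h := consec (6*(m:ℤ)+1-2*(j:ℤ))
            have hkZ : (k:ℤ) = 4*(m:ℤ) := by exact_mod_cast hm
            have : (0:ℤ) ≤ (3*(k:ℤ)+2-4*(j:ℤ))*(3*(k:ℤ)-4*(j:ℤ)) := by nlinarith
            exact_mod_cast this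
      rw [abs_le]
      constructor
      · have h0 : 0 ≤ 2*((j:ℝ)-1)*(3*(k:ℝ)+2-4*(j:ℝ))*(3*(k:ℝ)-4*(j:ℝ))/(((k:ℝ)-1)*(k:ℝ)*((k:ℝ)-2)) :=
          div_nonneg (by nlinarith) hD.le
        linarith [id2 (j:ℝ)]
      · have h0 : 0 ≤ 2*((k:ℝ)-(j:ℝ))*(4*(j:ℝ)-(k:ℝ)-2)*(4*(j:ℝ)-(k:ℝ)-4)/(((k:ℝ)-1)*(k:ℝ)*((k:ℝ)-2)) :=
          div_nonneg (by nlinarith) hD.le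
        linarith [id1 (j:ℝ)]
    have hQP : Q = P := by
      apply extremal_eq k Q P hQ 1 (m+1) (3*m) k le_rfl (by omega) (by omega) (by omega)
        le_rfl hdeg hbnd
      · have hz : (((1:ℕ)):ℝ) - 1 = 0 := by norm_num
        have h := id2 (((1:ℕ)):ℝ)
        rw [show (2*((((1:ℕ)):ℝ)-1)*(3*(k:ℝ)+2-4*(((1:ℕ)):ℝ))*(3*(k:ℝ)-4*(((1:ℕ)):ℝ))) = 0 from by push_cast; ring] at h
        rw [zero_div] at h; linarith
      · have h := id1 (((m+1:ℕ)):ℝ)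
        rw [show (2*((k:ℝ)-(((m+1:ℕ)):ℝ))*(4*(((m+1:ℕ)):ℝ)-(k:ℝ)-2)*(4*(((m+1:ℕ)):ℝ)-(k:ℝ)-4)) = 0 from by
          have hz : 4*(((m+1:ℕ)):ℝ)-(k:ℝ)-4 = 0 := by push_cast; rw [hkR]; ring
          rw [hz]; ring] at h
        rw [zero_div] at h; linarith
      · have h := id2 (((3*m:ℕ)):ℝ)
        rw [show (2*((((3*m:ℕ)):ℝ)-1)*(3*(k:ℝ)+2-4*(((3*m:ℕ)):ℝ))*(3*(k:ℝ)-4*(((3*m:ℕ)):ℝ))) = 0 from by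
          have hz : 3*(k:ℝ)-4*(((3*m:ℕ)):ℝ) = 0 := by push_cast; rw [hkR]; ring
          rw [hz]; ring] at h
        rw [zero_div] at h; linarith
      · have h := id1 (((k:ℕ)):ℝ)
        rw [show (2*((k:ℝ)-(((k:ℕ)):ℝ))*(4*(((k:ℕ)):ℝ)-(k:ℝ)-2)*(4*(((k:ℕ)):ℝ)-(k:ℝ)-4)) = 0 from by push_cast; ring] at h
        rw [zero_div] at h; linarith
    rw [hQP, heval]
    field_simp
    ring
end
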